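/- arXiv:2201.09180 — 9 statements merged into one kernel-verified Lean document; each statement's English description precedes it below -/
import Mathlib

section
/- Let 0 < p < 1 < q, let μ₁ > 0, μ₂ > 0, 0 < μ₃ < ∞, and let τ ∈ (0,1). Suppose V : [0,∞) → [0,∞) is differentiable and satisfies V'(t) ≤ -μ₁·V(t)^p - μ₂·V(t)^q + μ₃ for all t ≥ 0. Define the settling-time bound T₁ = max{ [Γ((1-p)/(q-p))·Γ((q-1)/(q-p)) / (μ₁(q-p))]·(μ₁/(τμ₂))^((1-p)/(q-p)) , [Γ((1-p)/(q-p))·Γ((q-1)/(q-p)) / (τμ₁(q-p))]·(τμ₁/μ₂)^((1-p)/(q-p)) }, where Γ is the Gamma function. Then for every t ≥ T₁ one has V(t) ≤ R, where R = min{ (μ₃/((1-τ)μ₁))^(1/p) , (μ₃/((1-τ)μ₂))^(1/q) } (improved fixed-time stability, Lemma 1). -/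
/-!
Above the residual level `R`, the constant `μ₃` is absorbed by the fraction `1 - τ` of one of the
two power terms, so that `V' ≤ -φ(V)` with `φ w = a * w ^ p + b * w ^ q`. Along such a trajectory
`t + ∫^{V t} dw / φ w` is nonincreasing, hence `V` spends at most `∫₀^∞ dw / φ w` time above `R`;
and once at or below `R` it stays there, because `V' < 0` on the level set `{V = R}`.

The substitution `w = ((a / b) * y) ^ (1 / (q - p))` turns the settling time into a multiple of
`∫₀^∞ y ^ (X - 1) / (1 + y) dy = Γ(X) Γ(1 - X)` with `X = (1 - p) / (q - p)`, which follows from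
Fubini's theorem after writing `1 / (1 + y) = ∫₀^∞ exp (-(1 + y) s) ds`.
-/

open Real MeasureTheory Set

theorem le_on_Icc_of_deriv_neg_at_level {V : ℝ → ℝ} {R s t : ℝ} (hV : Differentiable ℝ V)
    (hs : V s ≤ R) (hlevel : ∀ u ∈ Ico s t, V u = R → deriv V u < 0) :
    ∀ u ∈ Icc s t, V u ≤ R :=
  image_le_of_deriv_right_lt_deriv_boundary' hV.continuous.continuousOn
    (fun u _ => (hV u).hasDerivAt.hasDerivWithinAt) hs continuousOn_const
    (fun _ _ => hasDerivWithinAt_const _ _ _) hlevel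

theorem sub_le_integral_inv_of_deriv_le_neg {φ V : ℝ → ℝ} {s t : ℝ}
    (hφ : ContinuousOn φ (Ioi 0)) (hφpos : ∀ w, 0 < w → 0 < φ w) (hV : Differentiable ℝ V)
    (hst : s ≤ t) (hVpos : ∀ u ∈ Icc s t, 0 < V u)
    (hderiv : ∀ u ∈ Ioo s t, deriv V u ≤ -φ (V u)) :
    t - s ≤ ∫ w in V t..V s, (φ w)⁻¹ := by
  have hg : ContinuousOn (fun w => (φ w)⁻¹) (Ioi 0) := hφ.inv₀ fun w hw => (hφpos w hw).ne'
  have hVs := hVpos s (left_mem_Icc.2 hst)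
  have hprimitive : ∀ v > 0, HasDerivAt (fun v => ∫ w in V s..v, (φ w)⁻¹) (φ v)⁻¹ v :=
    fun v hv => intervalIntegral.integral_hasDerivAt_right
      (hg.mono fun x hx => (lt_min hVs hv).trans_le hx.1).intervalIntegrable
      (hg.stronglyMeasurableAtFilter isOpen_Ioi v hv) (hg.continuousAt (Ioi_mem_nhds hv))
  have hΦ : ∀ u ∈ Icc s t, HasDerivAt (fun u => u + ∫ w in V s..V u, (φ w)⁻¹)
      (1 + (φ (V u))⁻¹ * deriv V u) u := fun u hu =>
    (hasDerivAt_id u).add ((hprimitive _ (hVpos u hu)).comp u (hV u).hasDerivAt)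
  have hanti : AntitoneOn (fun u => u + ∫ w in V s..V u, (φ w)⁻¹) (Icc s t) := by
    refine antitoneOn_of_deriv_nonpos (convex_Icc s t)
      (fun u hu => (hΦ u hu).continuousAt.continuousWithinAt) (fun u hu => ?_) (fun u hu => ?_)
      <;> rw [interior_Icc] at hu
    · exact (hΦ u (Ioo_subset_Icc_self hu)).differentiableAt.differentiableWithinAt
    · have hφu := hφpos _ (hVpos u (Ioo_subset_Icc_self hu))
      rw [(hΦ u (Ioo_subset_Icc_self hu)).deriv]
      calc 1 + (φ (V u))⁻¹ * deriv V u ≤ 1 + (φ (V u))⁻¹ * -φ (V u) := by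
            gcongr; exact hderiv u hu
        _ = 0 := by field_simp; ring
  have hends := hanti (left_mem_Icc.2 hst) (right_mem_Icc.2 hst) hst
  simp only [intervalIntegral.integral_same, add_zero] at hends
  rw [intervalIntegral.integral_symm]
  linarith

theorem le_of_deriv_le_neg_of_integral_inv_le {φ V : ℝ → ℝ} {R t : ℝ}
    (hφ : ContinuousOn φ (Ioi 0)) (hφpos : ∀ w, 0 < w → 0 < φ w)
    (hint : IntegrableOn (fun w => (φ w)⁻¹) (Ioi 0)) (hR : 0 < R) (hV : Differentiable ℝ V)
    (hderiv : ∀ u, 0 ≤ u → R ≤ V u → deriv V u ≤ -φ (V u))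
    (ht : ∫ w in Ioi 0, (φ w)⁻¹ ≤ t) : V t ≤ R := by
  by_contra! hVt
  have habove : ∀ u ∈ Icc 0 t, R < V u := by
    intro u hu
    by_contra! hVu
    refine (le_on_Icc_of_deriv_neg_at_level hV hVu (fun x hx hVx => ?_) t
      (right_mem_Icc.2 hu.2)).not_gt hVt
    linarith [hderiv x (hu.1.trans hx.1) hVx.ge, hφpos _ (hVx ▸ hR)]
  have hI : 0 ≤ ∫ w in Ioi 0, (φ w)⁻¹ :=
    setIntegral_nonneg measurableSet_Ioi fun w hw => (inv_pos.2 (hφpos w hw)).le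
  have hintegrable : ∀ v > 0, IntervalIntegrable (fun w => (φ w)⁻¹) volume 0 v := fun v hv =>
    (intervalIntegrable_iff_integrableOn_Ioc_of_le hv.le).2 (hint.mono_set Ioc_subset_Ioi_self)
  have hV0 : 0 < V 0 := hR.trans (habove 0 (left_mem_Icc.2 (hI.trans ht)))
  have hVt0 : 0 < V t := hR.trans hVt
  have htravel := sub_le_integral_inv_of_deriv_le_neg hφ hφpos hV (hI.trans ht)
    (fun u hu => hR.trans (habove u hu))
    (fun u hu => hderiv u hu.1.le (habove u (Ioo_subset_Icc_self hu)).le)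
  rw [sub_zero, ← intervalIntegral.integral_interval_sub_left (hintegrable _ hV0)
    (hintegrable _ hVt0)] at htravel
  have hstart : ∫ w in 0..V 0, (φ w)⁻¹ ≤ ∫ w in Ioi 0, (φ w)⁻¹ := by
    rw [intervalIntegral.integral_of_le hV0.le]
    exact setIntegral_mono_set hint (ae_restrict_of_forall_mem measurableSet_Ioi
      fun w hw => (inv_pos.2 (hφpos w hw)).le) Ioc_subset_Ioi_self.eventuallyLE
  have hend : 0 < ∫ w in 0..V t, (φ w)⁻¹ :=
    intervalIntegral.intervalIntegral_pos_of_pos_on (hintegrable _ hVt0)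
      (fun w hw => inv_pos.2 (hφpos w hw.1)) hVt0
  linarith

theorem integral_exp_neg_one_add_mul_Ioi {u : ℝ} (hu : 0 < u) :
    ∫ s in Ioi 0, exp (-((1 + u) * s)) = (1 + u)⁻¹ := by
  have := integral_exp_mul_Ioi (a := -(1 + u)) (by linarith) 0
  simp only [mul_zero, exp_zero, neg_mul] at this
  rw [this]; field_simp

theorem integral_rpow_mul_inv_one_add_Ioi {X : ℝ} (hX0 : 0 < X) (hX1 : X < 1) :
    ∫ u in Ioi 0, u ^ (X - 1) * (1 + u)⁻¹ = Gamma X * Gamma (1 - X) := by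
  set F : ℝ → ℝ → ℝ := fun u s => u ^ (X - 1) * exp (-((1 + u) * s))
  have hF_s : ∀ u ∈ Ioi (0 : ℝ), ∫ s in Ioi 0, F u s = u ^ (X - 1) * (1 + u)⁻¹ := by
    intro u hu
    rw [integral_const_mul, integral_exp_neg_one_add_mul_Ioi hu]
  have hF_u : ∀ s ∈ Ioi (0 : ℝ),
      ∫ u in Ioi 0, F u s = Gamma X * (s ^ ((1 - X) - 1) * exp (-(1 * s))) := by
    intro s hs
    have hs : (0 : ℝ) < s := hs
    calc ∫ u in Ioi 0, F u s = ∫ u in Ioi 0, exp (-s) * (u ^ (X - 1) * exp (-(s * u))) :=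
          setIntegral_congr_fun measurableSet_Ioi fun u _ => by
            simp only [F]; rw [mul_left_comm, ← exp_add]; ring_nf
      _ = _ := by
          rw [integral_const_mul, integral_rpow_mul_exp_neg_mul_Ioi hX0 hs, one_div,
            inv_rpow hs.le, ← rpow_neg hs.le]
          ring_nf
  have h1X : 0 < 1 - X := by linarith
  have houter : ∫ s in Ioi 0, ∫ u in Ioi 0, F u s = Gamma X * Gamma (1 - X) := by
    rw [setIntegral_congr_fun measurableSet_Ioi hF_u, integral_const_mul,
      integral_rpow_mul_exp_neg_mul_Ioi h1X one_pos]
    simp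
  -- the integrability conditions of Fubini's theorem hold as the iterated integrals are nonzero
  have hFint : Integrable (Function.uncurry F)
      ((volume.restrict (Ioi 0)).prod (volume.restrict (Ioi 0))) := by
    refine (integrable_prod_iff' (Measurable.aestronglyMeasurable (by fun_prop))).2 ⟨?_, ?_⟩
    · filter_upwards [ae_restrict_mem measurableSet_Ioi] with s hs
      refine Integrable.of_integral_ne_zero ?_
      simp only [Function.uncurry_apply_pair, hF_u s hs]
      have hs : (0 : ℝ) < s := hs
      positivity
    · refine Integrable.of_integral_ne_zero ?_
      have hnorm : ∀ s ∈ Ioi (0 : ℝ), ∫ u in Ioi 0, ‖F u s‖ = ∫ u in Ioi 0, F u s :=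
        fun s _ => setIntegral_congr_fun measurableSet_Ioi fun u hu =>
          norm_of_nonneg (mul_nonneg (rpow_nonneg (le_of_lt hu) _) (exp_pos _).le)
      simp only [Function.uncurry_apply_pair]
      rw [setIntegral_congr_fun measurableSet_Ioi hnorm, houter]
      positivity
  calc ∫ u in Ioi 0, u ^ (X - 1) * (1 + u)⁻¹ = ∫ u in Ioi 0, ∫ s in Ioi 0, F u s :=
        (setIntegral_congr_fun measurableSet_Ioi hF_s).symm
    _ = ∫ s in Ioi 0, ∫ u in Ioi 0, F u s := integral_integral_swap hFint
    _ = _ := houter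

theorem integral_inv_mul_rpow_add_mul_rpow_Ioi {p q a b : ℝ} (hp1 : p < 1) (hq : 1 < q)
    (ha : 0 < a) (hb : 0 < b) :
    ∫ w in Ioi 0, (a * w ^ p + b * w ^ q)⁻¹
      = Gamma ((1 - p) / (q - p)) * Gamma ((q - 1) / (q - p)) / (a * (q - p))
        * (a / b) ^ ((1 - p) / (q - p)) := by
  have hqp : 0 < q - p := by linarith
  set X := (1 - p) / (q - p) with hX
  have hX0 : 0 < X := div_pos (by linarith) hqp
  have hX1 : X < 1 := (div_lt_one hqp).2 (by linarith)
  have hY : (q - 1) / (q - p) = 1 - X := by rw [hX]; field_simp; ring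
  set c := (q - p)⁻¹ with hc_def
  set k := a / b
  have hc : 0 < c := inv_pos.2 hqp
  have hk : 0 < k := div_pos ha hb
  -- `w = x ^ c` turns `a * w ^ p + b * w ^ q` into `x ^ (c * p) * (a + b * x)`
  have hpower : ∫ w in Ioi 0, (a * w ^ p + b * w ^ q)⁻¹
      = c * ∫ x in Ioi 0, x ^ (X - 1) * (a + b * x)⁻¹ := by
    rw [← integral_comp_rpow_Ioi_of_pos hc, ← integral_const_mul]
    refine setIntegral_congr_fun measurableSet_Ioi fun x (hx : 0 < x) => ?_
    have hcp : x ^ (c - 1) = x ^ (X - 1) * x ^ (c * p) := by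
      rw [← rpow_add hx, hX, hc_def]; congr 1; field_simp; ring
    have hcq : x ^ (c * q) = x ^ (c * p) * x := by
      rw [← rpow_add_one hx.ne', hc_def]; congr 1; field_simp; ring
    have := rpow_pos_of_pos hx (c * p)
    rw [smul_eq_mul, ← rpow_mul hx.le, ← rpow_mul hx.le, hcp, hcq]
    field_simp
  -- `x = k * y` turns `a + b * x` into `a * (1 + y)`
  have hscale : ∫ x in Ioi 0, x ^ (X - 1) * (a + b * x)⁻¹
      = k * ∫ y in Ioi 0, k ^ (X - 1) * a⁻¹ * (y ^ (X - 1) * (1 + y)⁻¹) := by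
    have := integral_comp_mul_left_Ioi' (fun x => x ^ (X - 1) * (a + b * x)⁻¹) 0 hk
    rw [mul_zero] at this
    rw [← this, smul_eq_mul]
    congr 1
    refine setIntegral_congr_fun measurableSet_Ioi fun y (hy : 0 < y) => ?_
    rw [mul_rpow hk.le hy.le]
    simp only [k]
    field_simp
  rw [hpower, hscale, integral_const_mul, integral_rpow_mul_inv_one_add_Ioi hX0 hX1, hY]
  rw [rpow_sub_one hk.ne', hc_def]
  field_simp

theorem le_of_deriv_le_neg_mul_rpow_add_mul_rpow {p q a b R t : ℝ} {V : ℝ → ℝ}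
    (hp1 : p < 1) (hq : 1 < q) (ha : 0 < a) (hb : 0 < b) (hR : 0 < R)
    (hV : Differentiable ℝ V)
    (hderiv : ∀ u, 0 ≤ u → R ≤ V u → deriv V u ≤ -(a * V u ^ p + b * V u ^ q))
    (ht : Gamma ((1 - p) / (q - p)) * Gamma ((q - 1) / (q - p)) / (a * (q - p))
        * (a / b) ^ ((1 - p) / (q - p)) ≤ t) :
    V t ≤ R := by
  have hφ : ContinuousOn (fun w => a * w ^ p + b * w ^ q) (Ioi 0) := fun w (hw : 0 < w) =>
    ((continuousAt_rpow_const w p (.inl hw.ne')).const_mul a |>.add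
      ((continuousAt_rpow_const w q (.inl hw.ne')).const_mul b)).continuousWithinAt
  have hφpos : ∀ w, 0 < w → 0 < a * w ^ p + b * w ^ q := fun w hw => by positivity
  have hqp : 0 < q - p := by linarith
  have hX : 0 < (1 - p) / (q - p) := div_pos (by linarith) hqp
  have hY : 0 < (q - 1) / (q - p) := div_pos (by linarith) hqp
  have hI := integral_inv_mul_rpow_add_mul_rpow_Ioi hp1 hq ha hb
  -- the Bochner integral of a non-integrable function is `0`
  have hint : IntegrableOn (fun w => (a * w ^ p + b * w ^ q)⁻¹) (Ioi 0) :=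
    Integrable.of_integral_ne_zero (hI ▸ by positivity)
  exact le_of_deriv_le_neg_of_integral_inv_le hφ hφpos hint hR hV hderiv (hI ▸ ht)

theorem le_mul_rpow_of_rpow_one_div_le {m c r v : ℝ} (hm : 0 ≤ m) (hc : 0 < c) (hr : 0 < r)
    (hv : (m / c) ^ (1 / r) ≤ v) : m ≤ c * v ^ r := by
  have hv0 : 0 ≤ v := (rpow_nonneg (div_nonneg hm hc.le) _).trans hv
  rw [one_div, rpow_inv_le_iff_of_pos (div_nonneg hm hc.le) hv0 hr, div_le_iff₀ hc] at hv
  linarith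

theorem improved_fixed_time_stability_general
    (p q μ₁ μ₂ μ₃ τ : ℝ)
    (hp : 0 < p) (hp1 : p < 1) (hq : 1 < q)
    (hμ₁ : 0 < μ₁) (hμ₂ : 0 < μ₂) (hμ₃ : 0 < μ₃)
    (hτ : τ ∈ Set.Ioo (0 : ℝ) 1)
    (V : ℝ → ℝ) (hVdiff : Differentiable ℝ V)
    (hVineq : ∀ t, 0 ≤ t →
      deriv V t ≤ -μ₁ * (V t) ^ p - μ₂ * (V t) ^ q + μ₃) :
    ∀ t,
      max ((Real.Gamma ((1 - p) / (q - p)) * Real.Gamma ((q - 1) / (q - p))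
              / (μ₁ * (q - p))) * (μ₁ / (τ * μ₂)) ^ ((1 - p) / (q - p)))
          ((Real.Gamma ((1 - p) / (q - p)) * Real.Gamma ((q - 1) / (q - p))
              / (τ * μ₁ * (q - p))) * (τ * μ₁ / μ₂) ^ ((1 - p) / (q - p)))
        ≤ t →
      V t ≤ min ((μ₃ / ((1 - τ) * μ₁)) ^ (1 / p))
                ((μ₃ / ((1 - τ) * μ₂)) ^ (1 / q)) := by
  intro t ht
  obtain ⟨hτ0, hτ1⟩ := hτ
  have h1τ : 0 < 1 - τ := by linarith
  rcases le_total ((μ₃ / ((1 - τ) * μ₁)) ^ (1 / p)) ((μ₃ / ((1 - τ) * μ₂)) ^ (1 / q))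
    with hR | hR
  · rw [min_eq_left hR]
    refine le_of_deriv_le_neg_mul_rpow_add_mul_rpow hp1 hq (mul_pos hτ0 hμ₁) hμ₂
      (by positivity) hVdiff (fun u hu hVu => ?_) ((le_max_right _ _).trans ht)
    have := le_mul_rpow_of_rpow_one_div_le hμ₃.le (mul_pos h1τ hμ₁) hp hVu
    linarith [hVineq u hu]
  · rw [min_eq_right hR]
    refine le_of_deriv_le_neg_mul_rpow_add_mul_rpow hp1 hq hμ₁ (mul_pos hτ0 hμ₂)
      (by positivity) hVdiff (fun u hu hVu => ?_) ((le_max_left _ _).trans ht)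
    have := le_mul_rpow_of_rpow_one_div_le hμ₃.le (mul_pos h1τ hμ₂) (by linarith) hVu
    linarith [hVineq u hu]

/-- Improved fixed-time stability theorem (Lemma 1): the settling-time
estimate `T₁` guarantees that `V` stays in the residual set after `T₁`. -/
theorem improved_fixed_time_stability
    (p q μ₁ μ₂ μ₃ τ : ℝ)
    (hp : 0 < p) (hp1 : p < 1) (hq : 1 < q)
    (hμ₁ : 0 < μ₁) (hμ₂ : 0 < μ₂) (hμ₃ : 0 < μ₃)
    (hτ : τ ∈ Set.Ioo (0 : ℝ) 1)
    (V : ℝ → ℝ) (hVdiff : Differentiable ℝ V)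
    (hVnonneg : ∀ t, 0 ≤ t → 0 ≤ V t)
    (hVineq : ∀ t, 0 ≤ t →
      deriv V t ≤ -μ₁ * (V t) ^ p - μ₂ * (V t) ^ q + μ₃) :
    ∀ t,
      max ((Real.Gamma ((1 - p) / (q - p)) * Real.Gamma ((q - 1) / (q - p))
              / (μ₁ * (q - p))) * (μ₁ / (τ * μ₂)) ^ ((1 - p) / (q - p)))
          ((Real.Gamma ((1 - p) / (q - p)) * Real.Gamma ((q - 1) / (q - p))
              / (τ * μ₁ * (q - p))) * (τ * μ₁ / μ₂) ^ ((1 - p) / (q - p)))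
        ≤ t →
      V t ≤ min ((μ₃ / ((1 - τ) * μ₁)) ^ (1 / p))
                ((μ₃ / ((1 - τ) * μ₂)) ^ (1 / q)) :=
  improved_fixed_time_stability_general p q μ₁ μ₂ μ₃ τ hp hp1 hq hμ₁ hμ₂ hμ₃ hτ V hVdiff hVineq
end

section
/- Let 0 < p < 1 < q, μ₁ > 0, μ₂ > 0 and τ ∈ (0,1). Then T₁ < T₂, where T₁ = max{ [Γ((1-p)/(q-p))·Γ((q-1)/(q-p)) / (μ₁(q-p))]·(μ₁/(τμ₂))^((1-p)/(q-p)) , [Γ((1-p)/(q-p))·Γ((q-1)/(q-p)) / (τμ₁(q-p))]·(τμ₁/μ₂)^((1-p)/(q-p)) } and T₂ = 1/(τμ₁(1-p)) + 1/(τμ₂(q-1)). That is, the settling-time estimate T₁ of the improved fixed-time stability theorem is strictly smaller (less conservative) than the classical estimate T₂ (Remark 1). -/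
/-!
Put `a = (1 - p)/(q - p)` and `r = μ₁/μ₂`. Both terms of `T₁` equal
`Γ(a) Γ(1 - a) r^a c / (τ μ₁ (q - p))` with `c = τ^(1 - a)` or `c = τ^a`, so `c < 1`, while
`T₂ = (1/a + r/(1 - a)) / (τ μ₁ (q - p))`. Since `Γ(1) = Γ(2) = 1` and `Γ` is convex,
`Γ(1 + a) ≤ 1` and `Γ(2 - a) ≤ 1`, i.e. `Γ(a) Γ(1 - a) ≤ 1/(a (1 - a))`; Bernoulli's inequality
`r^a ≤ 1 - a + a r` then gives `Γ(a) Γ(1 - a) r^a ≤ 1/a + r/(1 - a)`.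
-/

open Real

namespace Real

theorem Gamma_one_add_le_one {a : ℝ} (ha₀ : 0 ≤ a) (ha₁ : a ≤ 1) : Gamma (1 + a) ≤ 1 := by
  have h := convexOn_Gamma.2 (x := 1) (y := 2) (by norm_num) (by norm_num)
    (sub_nonneg.2 ha₁) ha₀ (sub_add_cancel 1 a)
  simp only [smul_eq_mul, Gamma_one, Gamma_two] at h
  rw [show 1 + a = (1 - a) * 1 + a * 2 by ring]
  linarith

theorem Gamma_mul_Gamma_one_sub_le {a : ℝ} (ha₀ : 0 < a) (ha₁ : a < 1) :
    Gamma a * Gamma (1 - a) ≤ 1 / (a * (1 - a)) := by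
  have hb₀ : 0 < 1 - a := sub_pos.2 ha₁
  have h₁ : a * Gamma a ≤ 1 := by
    rw [← Gamma_add_one ha₀.ne', add_comm]; exact Gamma_one_add_le_one ha₀.le ha₁.le
  have h₂ : (1 - a) * Gamma (1 - a) ≤ 1 := by
    rw [← Gamma_add_one hb₀.ne', add_comm]
    exact Gamma_one_add_le_one hb₀.le (by linarith)
  rw [le_div_iff₀ (mul_pos ha₀ hb₀)]
  calc Gamma a * Gamma (1 - a) * (a * (1 - a)) = (a * Gamma a) * ((1 - a) * Gamma (1 - a)) := by
        ring
    _ ≤ 1 * 1 := mul_le_mul h₁ h₂ (by positivity) zero_le_one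
    _ = 1 := one_mul 1

theorem rpow_le_one_add_mul_sub_one {r a : ℝ} (hr : 0 ≤ r) (ha₀ : 0 ≤ a) (ha₁ : a ≤ 1) :
    r ^ a ≤ 1 + a * (r - 1) := by
  simpa using rpow_one_add_le_one_add_mul_self (s := r - 1) (by linarith) ha₀ ha₁

theorem Gamma_mul_Gamma_one_sub_mul_rpow_mul_lt {a r c : ℝ} (ha₀ : 0 < a) (ha₁ : a < 1)
    (hr : 0 < r) (hc : c < 1) :
    Gamma a * Gamma (1 - a) * (r ^ a * c) < 1 / a + r / (1 - a) := by
  have hb₀ : 0 < 1 - a := sub_pos.2 ha₁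
  have hra : 0 < r ^ a := rpow_pos_of_pos hr a
  calc Gamma a * Gamma (1 - a) * (r ^ a * c) < Gamma a * Gamma (1 - a) * r ^ a := by
        gcongr; exact mul_lt_of_lt_one_right hra hc
    _ ≤ 1 / (a * (1 - a)) * (1 + a * (r - 1)) := by
        gcongr
        · exact Gamma_mul_Gamma_one_sub_le ha₀ ha₁
        · exact rpow_le_one_add_mul_sub_one hr.le ha₀.le ha₁.le
    _ = 1 / a + r / (1 - a) := by field_simp; ring

end Real

theorem improved_estimate_lt_classical_of_exponent {a d μ₁ μ₂ τ : ℝ} (ha₀ : 0 < a) (ha₁ : a < 1)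
    (hd : 0 < d) (hμ₁ : 0 < μ₁) (hμ₂ : 0 < μ₂) (hτ₀ : 0 < τ) (hτ₁ : τ < 1) :
    max (Gamma a * Gamma (1 - a) / (μ₁ * d) * (μ₁ / (τ * μ₂)) ^ a)
        (Gamma a * Gamma (1 - a) / (τ * μ₁ * d) * (τ * μ₁ / μ₂) ^ a)
      < 1 / (τ * μ₁ * (a * d)) + 1 / (τ * μ₂ * ((1 - a) * d)) := by
  set G := Gamma a * Gamma (1 - a)
  have hr : 0 < μ₁ / μ₂ := div_pos hμ₁ hμ₂
  have hD : 0 < τ * μ₁ * d := by positivity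
  have hT₁ : G / (μ₁ * d) * (μ₁ / (τ * μ₂)) ^ a
      = G * ((μ₁ / μ₂) ^ a * τ ^ (1 - a)) / (τ * μ₁ * d) := by
    rw [show μ₁ / (τ * μ₂) = μ₁ / μ₂ / τ by ring, div_rpow hr.le hτ₀.le, rpow_sub hτ₀, rpow_one]
    field_simp
  have hT₁' : G / (τ * μ₁ * d) * (τ * μ₁ / μ₂) ^ a
      = G * ((μ₁ / μ₂) ^ a * τ ^ a) / (τ * μ₁ * d) := by
    rw [show τ * μ₁ / μ₂ = τ * (μ₁ / μ₂) by ring, mul_rpow hτ₀.le hr.le]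
    ring
  have hT₂ : 1 / (τ * μ₁ * (a * d)) + 1 / (τ * μ₂ * ((1 - a) * d))
      = (1 / a + μ₁ / μ₂ / (1 - a)) / (τ * μ₁ * d) := by
    field_simp
  rw [hT₁, hT₁', hT₂, max_lt_iff]
  exact ⟨div_lt_div_of_pos_right (Gamma_mul_Gamma_one_sub_mul_rpow_mul_lt ha₀ ha₁ hr
      (rpow_lt_one hτ₀.le hτ₁ (sub_pos.2 ha₁))) hD,
    div_lt_div_of_pos_right (Gamma_mul_Gamma_one_sub_mul_rpow_mul_lt ha₀ ha₁ hr
      (rpow_lt_one hτ₀.le hτ₁ ha₀)) hD⟩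

theorem improved_estimate_lt_classical_general
    (p q μ₁ μ₂ τ : ℝ)
    (hp1 : p < 1) (hq : 1 < q)
    (hμ₁ : 0 < μ₁) (hμ₂ : 0 < μ₂)
    (hτ : τ ∈ Set.Ioo (0 : ℝ) 1) :
    max ((Real.Gamma ((1 - p) / (q - p)) * Real.Gamma ((q - 1) / (q - p))
            / (μ₁ * (q - p))) * (μ₁ / (τ * μ₂)) ^ ((1 - p) / (q - p)))
        ((Real.Gamma ((1 - p) / (q - p)) * Real.Gamma ((q - 1) / (q - p))
            / (τ * μ₁ * (q - p))) * (τ * μ₁ / μ₂) ^ ((1 - p) / (q - p)))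
      < 1 / (τ * μ₁ * (1 - p)) + 1 / (τ * μ₂ * (q - 1)) := by
  have hqp : 0 < q - p := by linarith
  set a := (1 - p) / (q - p) with ha
  have hp' : 1 - p = a * (q - p) := by rw [ha]; field_simp
  have hq' : q - 1 = (1 - a) * (q - p) := by rw [ha]; field_simp; ring
  have hb : (q - 1) / (q - p) = 1 - a := by rw [hq']; field_simp
  rw [hb, hp', hq']
  exact improved_estimate_lt_classical_of_exponent (div_pos (by linarith) hqp)
    ((div_lt_one hqp).2 (by linarith)) hqp hμ₁ hμ₂ hτ.1 hτ.2

/-- Remark 1: the improved settling-time estimate `T₁` is strictly smaller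
than the classical estimate `T₂`. -/
theorem improved_estimate_lt_classical
    (p q μ₁ μ₂ τ : ℝ)
    (hp : 0 < p) (hp1 : p < 1) (hq : 1 < q)
    (hμ₁ : 0 < μ₁) (hμ₂ : 0 < μ₂)
    (hτ : τ ∈ Set.Ioo (0 : ℝ) 1) :
    max ((Real.Gamma ((1 - p) / (q - p)) * Real.Gamma ((q - 1) / (q - p))
            / (μ₁ * (q - p))) * (μ₁ / (τ * μ₂)) ^ ((1 - p) / (q - p)))
        ((Real.Gamma ((1 - p) / (q - p)) * Real.Gamma ((q - 1) / (q - p))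
            / (τ * μ₁ * (q - p))) * (τ * μ₁ / μ₂) ^ ((1 - p) / (q - p)))
      < 1 / (τ * μ₁ * (1 - p)) + 1 / (τ * μ₂ * (q - 1)) :=
  improved_estimate_lt_classical_general p q μ₁ μ₂ τ hp1 hq hμ₁ hμ₂ hτ
end

section
/- Let 0 < p < 1 < q with p + q = 2, let μ₁ > 0, μ₂ > 0, 0 < μ₃ < ∞, and let τ ∈ (0,1). Suppose V : [0,∞) → [0,∞) is differentiable and satisfies V'(t) ≤ -μ₁·V(t)^p - μ₂·V(t)^q + μ₃ for all t ≥ 0. Define T̄ = 1/((1-p)·√(τμ₁μ₂)) and T* = T̄ · max{ π/2 - arctan( √(μ₂/(τμ₁)) · (μ₃/((1-τ)μ₁))^((1-p)/p) ) , π/2 - arctan( √(τμ₂/μ₁) · (μ₃/((1-τ)μ₂))^((1-p)/(2-p)) ) }. Then for every t ≥ T* one has V(t) ≤ R, where R = min{ (μ₃/((1-τ)μ₁))^(1/p) , (μ₃/((1-τ)μ₂))^(1/q) } (Lemma 2). -/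
/-!
Substituting `w = V ^ (1 - p)` turns `V' ≤ -a V ^ p - b V ^ (2 - p)` into the Riccati inequality
`w' ≤ -(1 - p) (a + b w ^ 2)`, along which `arctan (√(b / a) w)` decreases at rate at least
`(1 - p) √(a b)`. Above the residual bound `(μ₃ / ((1 - τ) μ₁)) ^ (1 / p)` the constant `μ₃` is
absorbed by the fraction `1 - τ` of the `μ₁`-term, leaving `(a, b) = (τ μ₁, μ₂)`; above
`(μ₃ / ((1 - τ) μ₂)) ^ (1 / q)` it is absorbed by the `μ₂`-term, leaving `(a, b) = (μ₁, τ μ₂)`.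
As `V` decreases whenever it exceeds such a bound `R`, if `V t > R` then `V > R` on all of
`[0, t]`, and the arctan, which starts below `π / 2` and ends above `arctan (√(b / a) R ^ (1 - p))`,
bounds `t` by the corresponding settling time.
-/

open Real

theorem image_le_of_deriv_neg_above {f : ℝ → ℝ} {a b R : ℝ} (hf : Differentiable ℝ f)
    (hderiv : ∀ x ∈ Set.Ico a b, R < f x → deriv f x < 0) (ha : f a ≤ R) :
    ∀ x ∈ Set.Icc a b, f x ≤ R := by
  intro x hx
  -- `f` can only reach the barrier `R + ε` at points where `f > R`, where it is decreasing.
  refine le_of_forall_pos_le_add fun ε hε => ?_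
  exact image_le_of_deriv_right_lt_deriv_boundary (B := fun _ => R + ε) (B' := 0)
    hf.continuous.continuousOn (fun y _ => (hf y).hasDerivAt.hasDerivWithinAt)
    (by linarith) (fun _ => hasDerivAt_const _ _)
    (fun y hy hyB => hderiv y hy (by rw [hyB]; linarith)) hx

theorem rpow_neg_mul_add_rpow_two_sub {v : ℝ} (hv : 0 < v) (p a b : ℝ) :
    v ^ (-p) * (a * v ^ p + b * v ^ (2 - p)) = a + b * (v ^ (1 - p)) ^ 2 := by
  have h₁ : v ^ (-p) * v ^ p = 1 := by rw [← rpow_add hv]; simp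
  have h₂ : v ^ (-p) * v ^ (2 - p) = (v ^ (1 - p)) ^ 2 := by
    rw [sq, ← rpow_add hv, ← rpow_add hv]; ring_nf
  linear_combination a * h₁ + b * h₂

theorem sqrt_div_mul_add_mul_sq {a b : ℝ} (ha : 0 < a) (hb : 0 ≤ b) (w : ℝ) :
    √(b / a) * (a + b * w ^ 2) = √(a * b) * (1 + (√(b / a) * w) ^ 2) := by
  have hab : √(a * b) = √(b / a) * a := by
    rw [show a * b = b / a * a ^ 2 by field_simp, sqrt_mul (by positivity), sqrt_sq ha.le]
  rw [hab, mul_pow, sq_sqrt (by positivity)]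
  field_simp

theorem deriv_arctan_sqrt_div_mul_rpow_le {f : ℝ → ℝ} {p a b x : ℝ} (hp : p < 1) (ha : 0 < a)
    (hb : 0 < b) (hf : DifferentiableAt ℝ f x) (hfx : 0 < f x)
    (hdrift : deriv f x ≤ -(a * f x ^ p + b * f x ^ (2 - p))) :
    deriv (fun s => arctan (√(b / a) * f s ^ (1 - p))) x ≤ -((1 - p) * √(a * b)) := by
  have hw : HasDerivAt (fun s => f s ^ (1 - p)) (deriv f x * (1 - p) * f x ^ (1 - p - 1)) x :=
    hf.hasDerivAt.rpow_const (Or.inl hfx.ne')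
  rw [((hw.const_mul √(b / a)).arctan).deriv, show 1 - p - 1 = -p by ring]
  have hK := sqrt_div_mul_add_mul_sq ha hb.le (f x ^ (1 - p))
  set K := √(b / a)
  set w := f x ^ (1 - p)
  have hfactor : 0 ≤ (1 - p) * K * f x ^ (-p) / (1 + (K * w) ^ 2) := by
    have := sub_pos.2 hp
    positivity
  calc 1 / (1 + (K * w) ^ 2) * (K * (deriv f x * (1 - p) * f x ^ (-p)))
      = (1 - p) * K * f x ^ (-p) / (1 + (K * w) ^ 2) * deriv f x := by ring
    _ ≤ (1 - p) * K * f x ^ (-p) / (1 + (K * w) ^ 2) * -(a * f x ^ p + b * f x ^ (2 - p)) :=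
      mul_le_mul_of_nonneg_left hdrift hfactor
    _ = -((1 - p) * (K * (a + b * w ^ 2)) / (1 + (K * w) ^ 2)) := by
      rw [← rpow_neg_mul_add_rpow_two_sub hfx]; ring
    _ = -((1 - p) * √(a * b)) := by
      rw [hK]; field_simp

theorem le_of_arctan_settling_time_le {f : ℝ → ℝ} {p a b R t : ℝ} (hp : p < 1) (ha : 0 < a)
    (hb : 0 < b) (hR : 0 < R) (hf : Differentiable ℝ f)
    (hdrift : ∀ s, 0 ≤ s → R < f s → deriv f s ≤ -(a * f s ^ p + b * f s ^ (2 - p)))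
    (ht : (π / 2 - arctan (√(b / a) * R ^ (1 - p))) / ((1 - p) * √(a * b)) ≤ t) :
    f t ≤ R := by
  by_contra! hft
  set K := √(b / a)
  set c := (1 - p) * √(a * b)
  have hc : 0 < c := mul_pos (sub_pos.2 hp) (sqrt_pos.2 (mul_pos ha hb))
  have ht₀ : 0 ≤ t :=
    (div_pos (sub_pos.2 (arctan_lt_pi_div_two _)) hc).le.trans ht
  have habove : ∀ s ∈ Set.Icc 0 t, R < f s := by
    intro s hs
    by_contra! hfs
    refine hft.not_ge (image_le_of_deriv_neg_above hf (fun x hx hRx => ?_) hfs t ⟨hs.2, le_rfl⟩)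
    have hfx := hR.trans hRx
    exact (hdrift x (hs.1.trans hx.1) hRx).trans_lt (neg_neg_of_pos (by positivity))
  set L := fun s => arctan (K * f s ^ (1 - p))
  have hdecay : L t - L 0 ≤ -c * (t - 0) := by
    refine (convex_Icc 0 t).image_sub_le_mul_sub_of_deriv_le ?_ ?_ ?_ 0 ⟨le_rfl, ht₀⟩ t
      ⟨ht₀, le_rfl⟩ ht₀
    · exact (continuous_arctan.comp (continuous_const.mul (hf.continuous.rpow_const
        fun _ => Or.inr (sub_pos.2 hp).le))).continuousOn
    · intro x hx
      rw [interior_Icc] at hx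
      exact ((hf x).rpow_const (Or.inl (hR.trans (habove x (Set.Ioo_subset_Icc_self hx))).ne')
        |>.const_mul K |>.arctan).differentiableWithinAt
    · intro x hx
      rw [interior_Icc] at hx
      have hRx := habove x (Set.Ioo_subset_Icc_self hx)
      exact deriv_arctan_sqrt_div_mul_rpow_le hp ha hb (hf x) (hR.trans hRx) (hdrift x hx.1.le hRx)
  have hL₀ : L 0 < π / 2 := arctan_lt_pi_div_two _
  have hLt : arctan (K * R ^ (1 - p)) < L t :=
    arctan_strictMono (mul_lt_mul_of_pos_left (rpow_lt_rpow hR.le hft (sub_pos.2 hp))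
      (sqrt_pos.2 (div_pos hb ha)))
  have hct := (div_le_iff₀ hc).1 ht
  linarith

theorem lt_mul_rpow_of_div_rpow_one_div_lt {μ c r v : ℝ} (hμ : 0 ≤ μ) (hc : 0 < c) (hr : 0 < r)
    (h : (μ / c) ^ (1 / r) < v) : μ < c * v ^ r := by
  have hv : 0 ≤ v := (rpow_nonneg (div_nonneg hμ hc.le) _).trans h.le
  rw [one_div, rpow_inv_lt_iff_of_pos (div_nonneg hμ hc.le) hv hr, div_lt_iff₀ hc] at h
  linarith

theorem rpow_one_div_rpow_one_sub {x : ℝ} (hx : 0 ≤ x) (r p : ℝ) :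
    (x ^ (1 / r)) ^ (1 - p) = x ^ ((1 - p) / r) := by
  rw [← rpow_mul hx]; ring_nf

theorem fixed_time_settling_time_p_add_q_eq_two_general
    (p q μ₁ μ₂ μ₃ τ : ℝ)
    (hp : 0 < p) (hp1 : p < 1) (hpq : p + q = 2)
    (hμ₁ : 0 < μ₁) (hμ₂ : 0 < μ₂) (hμ₃ : 0 < μ₃)
    (hτ : τ ∈ Set.Ioo (0 : ℝ) 1)
    (V : ℝ → ℝ) (hVdiff : Differentiable ℝ V)
    (hVineq : ∀ t, 0 ≤ t →
      deriv V t ≤ -μ₁ * (V t) ^ p - μ₂ * (V t) ^ q + μ₃) :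
    ∀ t,
      (1 / ((1 - p) * Real.sqrt (τ * μ₁ * μ₂))) *
        max (π / 2 - Real.arctan (Real.sqrt (μ₂ / (τ * μ₁)) *
              (μ₃ / ((1 - τ) * μ₁)) ^ ((1 - p) / p)))
            (π / 2 - Real.arctan (Real.sqrt (τ * μ₂ / μ₁) *
              (μ₃ / ((1 - τ) * μ₂)) ^ ((1 - p) / (2 - p))))
        ≤ t →
      V t ≤ min ((μ₃ / ((1 - τ) * μ₁)) ^ (1 / p))
                ((μ₃ / ((1 - τ) * μ₂)) ^ (1 / q)) := by
  obtain rfl : q = 2 - p := by linarith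
  obtain ⟨hτ₀, hτ₁⟩ := hτ
  have h1τ : 0 < 1 - τ := sub_pos.2 hτ₁
  have hc : 0 < (1 - p) * √(τ * μ₁ * μ₂) := mul_pos (sub_pos.2 hp1) (sqrt_pos.2 (by positivity))
  intro t ht
  rw [one_div_mul_eq_div, div_le_iff₀ hc, max_le_iff] at ht
  refine le_min ?_ ?_
  · refine le_of_arctan_settling_time_le hp1 (mul_pos hτ₀ hμ₁) hμ₂ (by positivity) hVdiff
      (fun s hs hRs => ?_) ?_
    · have := lt_mul_rpow_of_div_rpow_one_div_lt hμ₃.le (mul_pos h1τ hμ₁) hp hRs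
      linarith [hVineq s hs]
    · rw [rpow_one_div_rpow_one_sub (by positivity), div_le_iff₀ hc]
      exact ht.1
  · refine le_of_arctan_settling_time_le hp1 hμ₁ (mul_pos hτ₀ hμ₂) (by positivity) hVdiff
      (fun s hs hRs => ?_) ?_
    · have := lt_mul_rpow_of_div_rpow_one_div_lt hμ₃.le (mul_pos h1τ hμ₂) (by linarith) hRs
      linarith [hVineq s hs]
    · rw [rpow_one_div_rpow_one_sub (by positivity), show μ₁ * (τ * μ₂) = τ * μ₁ * μ₂ by ring,
        div_le_iff₀ hc]
      exact ht.2

/-- Lemma 2: sharpened settling-time estimate in the case `p + q = 2`. -/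
theorem fixed_time_settling_time_p_add_q_eq_two
    (p q μ₁ μ₂ μ₃ τ : ℝ)
    (hp : 0 < p) (hp1 : p < 1) (hq : 1 < q) (hpq : p + q = 2)
    (hμ₁ : 0 < μ₁) (hμ₂ : 0 < μ₂) (hμ₃ : 0 < μ₃)
    (hτ : τ ∈ Set.Ioo (0 : ℝ) 1)
    (V : ℝ → ℝ) (hVdiff : Differentiable ℝ V)
    (hVnonneg : ∀ t, 0 ≤ t → 0 ≤ V t)
    (hVineq : ∀ t, 0 ≤ t →
      deriv V t ≤ -μ₁ * (V t) ^ p - μ₂ * (V t) ^ q + μ₃) :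
    ∀ t,
      (1 / ((1 - p) * Real.sqrt (τ * μ₁ * μ₂))) *
        max (π / 2 - Real.arctan (Real.sqrt (μ₂ / (τ * μ₁)) *
              (μ₃ / ((1 - τ) * μ₁)) ^ ((1 - p) / p)))
            (π / 2 - Real.arctan (Real.sqrt (τ * μ₂ / μ₁) *
              (μ₃ / ((1 - τ) * μ₂)) ^ ((1 - p) / (2 - p))))
        ≤ t →
      V t ≤ min ((μ₃ / ((1 - τ) * μ₁)) ^ (1 / p))
                ((μ₃ / ((1 - τ) * μ₂)) ^ (1 / q)) :=
  fixed_time_settling_time_p_add_q_eq_two_general p q μ₁ μ₂ μ₃ τ hp hp1 hpq hμ₁ hμ₂ hμ₃ hτ V hVdiff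
    hVineq
end

section
/- Let p = p₂/p₁ with 0 < p < 1 and q = q₂/q₁ with q > 1, where p₁, p₂, q₁, q₂ are positive integers; let μ₁ > 0, μ₂ > 0, 0 < μ₃ < ∞, and τ ∈ (0,1). Suppose V : [0,∞) → [0,∞) is differentiable and satisfies V'(t) ≤ -μ₁·V(t)^p - μ₂·V(t)^q + μ₃ for all t ≥ 0. Set l = (1-p)/(q-p), c_T = π/sin(lπ), and define I_ef(x) = ∫₀^x [p₁q₁·s^(p₁q₁-1) / (μ₁·s^(p₂q₁) + μ₂·s^(p₁q₂))] ds for x ≥ 0 (this integral converges since p₁q₁ - 1 - p₂q₁ ≥ 0). Define T₅ = c_T/(τμ₁(q-p))·(τμ₁/μ₂)^l - I_ef( (μ₃/((1-τ)μ₁))^(1/(p₂q₁)) ) + I_ef(0) and T₆ = c_T/(μ₁(q-p))·(μ₁/(τμ₂))^l - I_ef( (μ₃/((1-τ)μ₂))^(1/(p₁q₂)) ) + I_ef(0). Then for every t ≥ max{T₅, T₆} one has V(t) ≤ R, where R = min{ (μ₃/((1-τ)μ₁))^(1/p) , (μ₃/((1-τ)μ₂))^(1/q) } (Lemma 4). 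-/
/-!
Above the level `R = min R₁ R₂` the constant `μ₃` is absorbed by one of the two decay terms:
`R₁ ≤ V` gives `μ₃ ≤ (1 - τ) μ₁ V ^ p`, hence `V' ≤ -(τ μ₁ V ^ p + μ₂ V ^ q)`, and `R₂ ≤ V`
gives `V' ≤ -(μ₁ V ^ p + τ μ₂ V ^ q)`. So `V` cannot cross `R` upwards, and comparison with the
separable equation `v' = -g v` shows that `V` cannot stay above `R` for longer than
`∫_R^∞ dv / g v`. For `g v = a v ^ p + b v ^ q` the integral over `(0, ∞)` follows from the
substitution `u = (b / a) v ^ (q - p)` and the reflection formula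
`∫_0^∞ u ^ (l - 1) / (1 + u) du = Γ(l) Γ(1 - l) = π / sin (π l)`. The head `∫_0^R dv / g v`
dominates `I_ef (R ^ (1 / (p₁ q₁)))`, which the substitution `v = s ^ (p₁ q₁)` turns into
`∫_0^R dv / (μ₁ v ^ p + μ₂ v ^ q)`.
-/

open Real

/-- The auxiliary elementary function `I_ef` of Lemma 4 (as a definite
integral from `0`). -/
noncomputable def Ief (p₁ p₂ q₁ q₂ : ℕ) (μ₁ μ₂ x : ℝ) : ℝ :=
  ∫ s in (0 : ℝ)..x,
    ((p₁ * q₁ : ℕ) : ℝ) * s ^ (p₁ * q₁ - 1) /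
      (μ₁ * s ^ (p₂ * q₁) + μ₂ * s ^ (p₁ * q₂))

open MeasureTheory Set intervalIntegral

theorem intervalIntegral_rpow_mul_one_sub_rpow {s t : ℝ} (hs : 0 < s) (ht : 0 < t) :
    ∫ x in (0 : ℝ)..1, x ^ (s - 1) * (1 - x) ^ (t - 1) = Gamma s * Gamma t / Gamma (s + t) := by
  have h := Complex.Gamma_mul_Gamma_eq_betaIntegral (s := s) (t := t)
    (by simpa using hs) (by simpa using ht)
  have hB : Complex.betaIntegral s t
      = ((∫ x in (0 : ℝ)..1, x ^ (s - 1) * (1 - x) ^ (t - 1) : ℝ) : ℂ) := by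
    rw [Complex.betaIntegral, ← integral_ofReal]
    refine integral_congr fun x hx => ?_
    rw [uIcc_of_le zero_le_one] at hx
    push_cast
    rw [Complex.ofReal_cpow hx.1, Complex.ofReal_cpow (sub_nonneg.2 hx.2)]
    push_cast
    rfl
  rw [hB, ← Complex.ofReal_add, Complex.Gamma_ofReal, Complex.Gamma_ofReal,
    Complex.Gamma_ofReal] at h
  rw [eq_div_iff (Gamma_pos_of_pos (add_pos hs ht)).ne', mul_comm]
  exact_mod_cast h.symm

theorem integral_Ioo_zero_one_eq_integral_Ioi (f : ℝ → ℝ) :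
    ∫ x in Ioo (0 : ℝ) 1, f x = ∫ u in Ioi (0 : ℝ), ((1 + u) ^ 2)⁻¹ * f (u / (1 + u)) := by
  have himg : (fun u : ℝ => u / (1 + u)) '' Ioi 0 = Ioo 0 1 := by
    ext y
    constructor
    · rintro ⟨u, hu, rfl⟩
      have hu : 0 < u := hu
      exact ⟨by positivity, (div_lt_one (by positivity)).2 (by linarith)⟩
    · rintro ⟨hy0, hy1⟩
      have h1y : 1 - y ≠ 0 := by linarith
      refine ⟨y / (1 - y), div_pos hy0 (by linarith), ?_⟩
      field_simp
      ring
  have hderiv : ∀ u ∈ Ioi (0 : ℝ),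
      HasDerivWithinAt (fun u : ℝ => u / (1 + u)) ((1 + u) ^ 2)⁻¹ (Ioi 0) u := by
    intro u hu
    have h1u : 1 + u ≠ 0 := by have : (0 : ℝ) < u := hu; positivity
    refine (((hasDerivAt_id' u).fun_div ((hasDerivAt_id' u).const_add 1) h1u).congr_deriv
      ?_).hasDerivWithinAt
    field_simp
    ring
  have hinj : InjOn (fun u : ℝ => u / (1 + u)) (Ioi 0) := by
    intro u hu v hv h
    have hu : (0 : ℝ) < u := hu
    have hv : (0 : ℝ) < v := hv
    field_simp at h
    linarith
  rw [← himg, integral_image_eq_integral_abs_deriv_smul measurableSet_Ioi hderiv hinj]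
  refine setIntegral_congr_fun measurableSet_Ioi fun u hu => ?_
  have hu : (0 : ℝ) < u := hu
  rw [smul_eq_mul, abs_of_pos (by positivity)]

theorem integral_Ioi_rpow_div_one_add_rpow {s t : ℝ} (hs : 0 < s) (ht : 0 < t) :
    ∫ u in Ioi (0 : ℝ), u ^ (s - 1) / (1 + u) ^ (s + t) = Gamma s * Gamma t / Gamma (s + t) := by
  rw [← intervalIntegral_rpow_mul_one_sub_rpow hs ht, integral_of_le zero_le_one,
    integral_Ioc_eq_integral_Ioo, integral_Ioo_zero_one_eq_integral_Ioi]
  refine setIntegral_congr_fun measurableSet_Ioi fun u hu => ?_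
  have hu : (0 : ℝ) < u := hu
  have h1u : (0 : ℝ) < 1 + u := by positivity
  have hsplit : (1 + u) ^ (s + t) = (1 + u) ^ (s - 1) * (1 + u) ^ (t - 1) * (1 + u) ^ 2 := by
    rw [← rpow_add h1u, ← rpow_natCast, ← rpow_add h1u]
    ring_nf
  have hcompl : 1 - u / (1 + u) = (1 + u)⁻¹ := by field_simp; ring
  rw [hcompl, div_rpow hu.le h1u.le, inv_rpow h1u.le, hsplit]
  have := rpow_pos_of_pos h1u (s - 1)
  have := rpow_pos_of_pos h1u (t - 1)
  field_simp

theorem integral_Ioi_rpow_div_one_add {l : ℝ} (hl0 : 0 < l) (hl1 : l < 1) :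
    ∫ u in Ioi (0 : ℝ), u ^ (l - 1) / (1 + u) = π / sin (π * l) := by
  have h := integral_Ioi_rpow_div_one_add_rpow hl0 (sub_pos.2 hl1)
  simp only [add_sub_cancel, rpow_one, Gamma_one, div_one] at h
  rw [h, Gamma_mul_Gamma_one_sub]

section PowerDensity

variable {p q a b : ℝ}

theorem add_rpow_pos (ha : 0 < a) (hb : 0 < b) {v : ℝ} (hv : 0 < v) :
    0 < a * v ^ p + b * v ^ q := by
  positivity

theorem continuousOn_add_rpow : ContinuousOn (fun v : ℝ => a * v ^ p + b * v ^ q) (Ioi 0) :=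
  fun _ hv =>
    ((continuousAt_const.mul (continuousAt_rpow_const _ _ (Or.inl (ne_of_gt hv)))).add
      (continuousAt_const.mul (continuousAt_rpow_const _ _ (Or.inl (ne_of_gt hv))))
      ).continuousWithinAt

theorem integrableOn_Ioi_inv_add_rpow (hp1 : p < 1) (hq : 1 < q) (ha : 0 < a) (hb : 0 < b) :
    IntegrableOn (fun v : ℝ => (a * v ^ p + b * v ^ q)⁻¹) (Ioi 0) := by
  have hmeas : AEStronglyMeasurable (fun v : ℝ => (a * v ^ p + b * v ^ q)⁻¹) := by fun_prop
  rw [← Ioc_union_Ioi_eq_Ioi zero_le_one]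
  refine IntegrableOn.union ?_ ?_
  · have hbound : IntegrableOn (fun v : ℝ => a⁻¹ * v ^ (-p)) (Ioc 0 1) :=
      ((intervalIntegrable_iff_integrableOn_Ioc_of_le zero_le_one).1
        (intervalIntegrable_rpow' (by linarith))).const_mul _
    refine hbound.mono' hmeas.restrict ((ae_restrict_iff' measurableSet_Ioc).2
      (Filter.Eventually.of_forall fun v hv => ?_))
    have hv : 0 < v := hv.1
    rw [norm_inv, norm_of_nonneg (add_rpow_pos ha hb hv).le, rpow_neg hv.le, ← mul_inv]
    exact inv_anti₀ (by positivity) (le_add_of_nonneg_right (by positivity))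
  · have hbound : IntegrableOn (fun v : ℝ => b⁻¹ * v ^ (-q)) (Ioi 1) :=
      ((integrableOn_Ioi_rpow_iff zero_lt_one).2 (by linarith)).const_mul _
    refine hbound.mono' hmeas.restrict ((ae_restrict_iff' measurableSet_Ioi).2
      (Filter.Eventually.of_forall fun v hv => ?_))
    have hv : 0 < v := zero_lt_one.trans hv
    rw [norm_inv, norm_of_nonneg (add_rpow_pos ha hb hv).le, rpow_neg hv.le, ← mul_inv]
    exact inv_anti₀ (by positivity) (le_add_of_nonneg_left (by positivity))

theorem integral_Ioi_inv_add_rpow (hp1 : p < 1) (hq : 1 < q) (ha : 0 < a) (hb : 0 < b) :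
    ∫ v in Ioi (0 : ℝ), (a * v ^ p + b * v ^ q)⁻¹
      = π / sin ((1 - p) / (q - p) * π) / (a * (q - p)) * (a / b) ^ ((1 - p) / (q - p)) := by
  set m := q - p with hm
  set l := (1 - p) / m with hl
  set c := b / a with hc
  have hm0 : 0 < m := by linarith
  have hc0 : 0 < c := div_pos hb ha
  have hsub : ∫ v in Ioi (0 : ℝ), (m * v ^ (m - 1)) • ((c * v ^ m) ^ (l - 1) / (1 + c * v ^ m))
      = c⁻¹ * (π / sin (π * l)) := by
    rw [integral_comp_rpow_Ioi_of_pos (g := fun y => (c * y) ^ (l - 1) / (1 + c * y)) hm0,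
      integral_comp_mul_left_Ioi (fun u => u ^ (l - 1) / (1 + u)) 0 hc0, mul_zero,
      integral_Ioi_rpow_div_one_add (div_pos (by linarith) hm0) ((div_lt_one hm0).2 (by linarith)),
      smul_eq_mul]
  have hpt : ∀ v ∈ Ioi (0 : ℝ), (m * v ^ (m - 1)) • ((c * v ^ m) ^ (l - 1) / (1 + c * v ^ m))
      = (m * a * c ^ (l - 1)) * (a * v ^ p + b * v ^ q)⁻¹ := by
    intro v hv
    have hv : 0 < v := hv
    have hexp : m * (l - 1) = 1 - q := by rw [hl]; field_simp; ring
    have hfactor : a * v ^ p + b * v ^ q = a * v ^ p * (1 + c * v ^ m) := by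
      rw [mul_add, mul_one]
      congr 1
      calc b * v ^ q = (a * c) * v ^ (p + m) := by
            rw [hc, mul_div_cancel₀ _ ha.ne', hm, add_sub_cancel]
        _ = a * v ^ p * (c * v ^ m) := by rw [rpow_add hv]; ring
    have hvexp : v ^ (m - 1) * v ^ (1 - q) = (v ^ p)⁻¹ := by
      rw [← rpow_add hv, ← rpow_neg hv.le, hm]
      ring_nf
    rw [hfactor, smul_eq_mul, mul_rpow hc0.le (by positivity), ← rpow_mul hv.le, hexp]
    calc m * v ^ (m - 1) * (c ^ (l - 1) * v ^ (1 - q) / (1 + c * v ^ m))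
        = m * c ^ (l - 1) * (v ^ (m - 1) * v ^ (1 - q)) / (1 + c * v ^ m) := by ring
      _ = _ := by
        rw [hvexp]
        field_simp
  rw [setIntegral_congr_fun measurableSet_Ioi hpt, MeasureTheory.integral_const_mul,
    rpow_sub_one hc0.ne'] at hsub
  have hcl : 0 < c ^ l := rpow_pos_of_pos hc0 l
  rw [show a / b = c⁻¹ by rw [hc, inv_div], inv_rpow hc0.le, mul_comm l π]
  field_simp at hsub ⊢
  linear_combination hsub

theorem Ief_zero (p₁ p₂ q₁ q₂ : ℕ) (μ₁ μ₂ : ℝ) : Ief p₁ p₂ q₁ q₂ μ₁ μ₂ 0 = 0 :=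
  integral_same

theorem Ief_eq_intervalIntegral {p₁ p₂ q₁ q₂ : ℕ} (hp₁ : 0 < p₁) (hq₁ : 0 < q₁) {μ₁ μ₂ x : ℝ}
    (hpdef : p = (p₂ : ℝ) / p₁) (hqdef : q = (q₂ : ℝ) / q₁) (hx : 0 ≤ x) :
    Ief p₁ p₂ q₁ q₂ μ₁ μ₂ x = ∫ v in 0..x ^ (p₁ * q₁), (μ₁ * v ^ p + μ₂ * v ^ q)⁻¹ := by
  have hsub := integral_comp_mul_deriv_of_deriv_nonneg (a := 0) (b := x)
    (g := fun v : ℝ => (μ₁ * v ^ p + μ₂ * v ^ q)⁻¹) (continuous_pow (p₁ * q₁)).continuousOn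
    (fun s _ => hasDerivAt_pow (p₁ * q₁) s)
    (fun s hs => by
      rw [min_eq_left hx] at hs
      have : 0 < s := hs.1
      positivity)
  rw [zero_pow (Nat.mul_pos hp₁ hq₁).ne'] at hsub
  rw [← hsub, Ief]
  refine integral_congr_ae (Filter.Eventually.of_forall fun s hs => ?_)
  rw [uIoc_of_le hx] at hs
  have hp : ((p₁ * q₁ : ℕ) : ℝ) * p = (p₂ * q₁ : ℕ) := by
    rw [hpdef]; push_cast; field_simp
  have hq : ((p₁ * q₁ : ℕ) : ℝ) * q = (p₁ * q₂ : ℕ) := by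
    rw [hqdef]; push_cast; field_simp
  simp only [Function.comp_apply, ← rpow_natCast_mul hs.1.le, hp, hq, rpow_natCast]
  ring

theorem integral_Ioi_inv_add_rpow_le_sub_Ief {p₁ p₂ q₁ q₂ : ℕ} (hp₁ : 0 < p₁) (hq₁ : 0 < q₁)
    {μ₁ μ₂ x : ℝ} (hpdef : p = (p₂ : ℝ) / p₁) (hqdef : q = (q₂ : ℝ) / q₁)
    (hp1 : p < 1) (hq : 1 < q) (ha : 0 < a) (hb : 0 < b) (haμ : a ≤ μ₁) (hbμ : b ≤ μ₂)
    (hx : 0 ≤ x) :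
    ∫ v in Ioi (x ^ (p₁ * q₁)), (a * v ^ p + b * v ^ q)⁻¹
      ≤ (∫ v in Ioi (0 : ℝ), (a * v ^ p + b * v ^ q)⁻¹) - Ief p₁ p₂ q₁ q₂ μ₁ μ₂ x := by
  have hr : 0 ≤ x ^ (p₁ * q₁) := pow_nonneg hx _
  have hii : ∀ {a b : ℝ}, 0 < a → 0 < b →
      IntervalIntegrable (fun v : ℝ => (a * v ^ p + b * v ^ q)⁻¹) volume 0 (x ^ (p₁ * q₁)) :=
    fun ha hb => (intervalIntegrable_iff_integrableOn_Ioc_of_le hr).2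
      ((integrableOn_Ioi_inv_add_rpow hp1 hq ha hb).mono_set Ioc_subset_Ioi_self)
  rw [le_sub_comm, integral_Ioi_sub_Ioi (integrableOn_Ioi_inv_add_rpow hp1 hq ha hb) hr,
    Ief_eq_intervalIntegral hp₁ hq₁ hpdef hqdef hx]
  refine integral_mono_on_of_le_Ioo hr (hii (ha.trans_le haμ) (hb.trans_le hbμ)) (hii ha hb)
    fun v hv => inv_anti₀ (add_rpow_pos ha hb hv.1) ?_
  have hv : 0 < v := hv.1
  gcongr

end PowerDensity
section Comparison

variable {g V : ℝ → ℝ} {r t : ℝ}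

theorem le_intervalIntegral_inv_of_deriv_le_neg (ht : 0 ≤ t) (hg : ContinuousOn g (Ioi r))
    (hg_pos : ∀ v, r < v → 0 < g v) (hV : Differentiable ℝ V)
    (hVr : ∀ s ∈ Icc 0 t, r < V s) (hV' : ∀ s ∈ Icc 0 t, deriv V s ≤ -g (V s)) :
    t ≤ ∫ v in V t..V 0, (g v)⁻¹ := by
  have hcont : ContinuousOn (fun v => (g v)⁻¹) (Ioi r) :=
    hg.inv₀ fun v hv => (hg_pos v hv).ne'
  have hG : ∀ s ∈ Icc 0 t,
      HasDerivAt (fun x => ∫ v in V 0..x, (g v)⁻¹) (g (V s))⁻¹ (V s) := by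
    intro s hs
    refine integral_hasDerivAt_right ?_ (hcont.stronglyMeasurableAtFilter isOpen_Ioi _ (hVr s hs))
      (hcont.continuousAt (isOpen_Ioi.mem_nhds (hVr s hs)))
    refine (hcont.mono fun v hv => ?_).intervalIntegrable
    rcases le_total (V 0) (V s) with h | h
    · rw [uIcc_of_le h] at hv; exact (hVr 0 ⟨le_rfl, ht⟩).trans_le hv.1
    · rw [uIcc_of_ge h] at hv; exact (hVr s hs).trans_le hv.1
  have hF : ∀ s ∈ Icc 0 t, HasDerivAt (fun s => (∫ v in V 0..V s, (g v)⁻¹) + s)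
      ((g (V s))⁻¹ * deriv V s + 1) s := fun s hs =>
    ((hG s hs).comp s (hV s).hasDerivAt).add (hasDerivAt_id s)
  have hanti : AntitoneOn (fun s => (∫ v in V 0..V s, (g v)⁻¹) + s) (Icc 0 t) := by
    refine antitoneOn_of_hasDerivWithinAt_nonpos (convex_Icc 0 t)
      (fun s hs => (hF s hs).continuousAt.continuousWithinAt)
      (fun s hs => (hF s (interior_subset hs)).hasDerivWithinAt) fun s hs => ?_
    have hs := interior_subset hs
    have hpos := hg_pos _ (hVr s hs)
    have : (g (V s))⁻¹ * deriv V s ≤ (g (V s))⁻¹ * -g (V s) :=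
      mul_le_mul_of_nonneg_left (hV' s hs) (inv_nonneg.2 hpos.le)
    rw [mul_neg, inv_mul_cancel₀ hpos.ne'] at this
    linarith
  have := hanti ⟨le_rfl, ht⟩ ⟨ht, le_rfl⟩ ht
  simp only [integral_same, zero_add] at this
  rw [integral_symm]
  linarith

theorem exists_le_of_integral_Ioi_inv_le (hg : ContinuousOn g (Ioi r))
    (hg_pos : ∀ v, r < v → 0 < g v) (hint : IntegrableOn (fun v => (g v)⁻¹) (Ioi r))
    (hV : Differentiable ℝ V) (hV' : ∀ s ∈ Icc 0 t, r < V s → deriv V s ≤ -g (V s))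
    (ht : ∫ v in Ioi r, (g v)⁻¹ ≤ t) : ∃ s ∈ Icc 0 t, V s ≤ r := by
  by_contra! hVr
  have hnonneg : ∀ c, r ≤ c → 0 ≤ ∫ v in Ioi c, (g v)⁻¹ := fun c hc =>
    setIntegral_nonneg measurableSet_Ioi fun v hv => (inv_pos.2 (hg_pos v (hc.trans_lt hv))).le
  have ht0 : 0 ≤ t := (hnonneg r le_rfl).trans ht
  have hVt := hVr t ⟨ht0, le_rfl⟩
  have hint' : ∀ c, r ≤ c → IntegrableOn (fun v => (g v)⁻¹) (Ioi c) := fun c hc =>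
    hint.mono_set (Ioi_subset_Ioi hc)
  have hhead : 0 < ∫ v in r..V t, (g v)⁻¹ :=
    intervalIntegral_pos_of_pos_on
      ((intervalIntegrable_iff_integrableOn_Ioc_of_le hVt.le).2 (hint.mono_set Ioc_subset_Ioi_self))
      (fun v hv => inv_pos.2 (hg_pos v hv.1)) hVt
  refine (lt_irrefl t) ?_
  calc t ≤ ∫ v in V t..V 0, (g v)⁻¹ :=
        le_intervalIntegral_inv_of_deriv_le_neg ht0 hg hg_pos hV hVr fun s hs => hV' s hs (hVr s hs)
    _ = (∫ v in Ioi (V t), (g v)⁻¹) - ∫ v in Ioi (V 0), (g v)⁻¹ :=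
        (integral_Ioi_sub_Ioi' (hint' _ hVt.le) (hint' _ (hVr 0 ⟨le_rfl, ht0⟩).le)).symm
    _ ≤ ∫ v in Ioi (V t), (g v)⁻¹ := sub_le_self _ (hnonneg _ (hVr 0 ⟨le_rfl, ht0⟩).le)
    _ < (∫ v in r..V t, (g v)⁻¹) + ∫ v in Ioi (V t), (g v)⁻¹ := lt_add_of_pos_left _ hhead
    _ = ∫ v in Ioi r, (g v)⁻¹ := integral_interval_add_Ioi hint (hint' _ hVt.le)
    _ ≤ t := ht

theorem le_of_integral_Ioi_inv_le (hg : ContinuousOn g (Ioi r))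
    (hg_pos : ∀ v, r ≤ v → 0 < g v) (hint : IntegrableOn (fun v => (g v)⁻¹) (Ioi r))
    (hV : Differentiable ℝ V) (hV' : ∀ s, 0 ≤ s → r ≤ V s → deriv V s ≤ -g (V s))
    (ht : ∫ v in Ioi r, (g v)⁻¹ ≤ t) : V t ≤ r := by
  obtain ⟨s, hs, hVs⟩ := exists_le_of_integral_Ioi_inv_le hg
    (fun v hv => hg_pos v hv.le) hint hV (fun s hs hVs => hV' s hs.1 hVs.le) ht
  refine image_le_of_deriv_right_lt_deriv_boundary (B := fun _ => r) (B' := fun _ => 0)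
    hV.continuous.continuousOn (fun x _ => (hV x).hasDerivAt.hasDerivWithinAt) hVs
    (fun _ => hasDerivAt_const _ _) (fun x hx hVx => ?_) ⟨hs.2, le_rfl⟩
  have := hV' x (hs.1.trans hx.1) hVx.ge
  rw [hVx] at this
  linarith [hg_pos r le_rfl]

end Comparison

theorem le_pow_of_settling_bound_le {p₁ p₂ q₁ q₂ : ℕ} (hp₁ : 0 < p₁) (hq₁ : 0 < q₁)
    {p q a b μ₁ μ₂ x t : ℝ} (hpdef : p = (p₂ : ℝ) / p₁) (hqdef : q = (q₂ : ℝ) / q₁)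
    (hp1 : p < 1) (hq : 1 < q) (ha : 0 < a) (hb : 0 < b) (haμ : a ≤ μ₁) (hbμ : b ≤ μ₂)
    (hx : 0 < x) {V : ℝ → ℝ} (hV : Differentiable ℝ V)
    (hV' : ∀ s, 0 ≤ s → x ^ (p₁ * q₁) ≤ V s → deriv V s ≤ -(a * V s ^ p + b * V s ^ q))
    (ht : π / sin ((1 - p) / (q - p) * π) / (a * (q - p)) * (a / b) ^ ((1 - p) / (q - p))
      - Ief p₁ p₂ q₁ q₂ μ₁ μ₂ x ≤ t) :
    V t ≤ x ^ (p₁ * q₁) := by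
  have hr : 0 < x ^ (p₁ * q₁) := pow_pos hx _
  refine le_of_integral_Ioi_inv_le (continuousOn_add_rpow.mono (Ioi_subset_Ioi hr.le))
    (fun v hv => add_rpow_pos ha hb (hr.trans_le hv))
    ((integrableOn_Ioi_inv_add_rpow hp1 hq ha hb).mono_set (Ioi_subset_Ioi hr.le)) hV hV'
    ((integral_Ioi_inv_add_rpow_le_sub_Ief hp₁ hq₁ hpdef hqdef hp1 hq ha hb haμ hbμ hx.le).trans ?_)
  rwa [integral_Ioi_inv_add_rpow hp1 hq ha hb]

theorem le_mul_rpow_of_div_rpow_one_div_le {c k e v : ℝ} (hc : 0 ≤ c) (hk : 0 < k) (he : 0 < e)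
    (hv : (c / k) ^ (1 / e) ≤ v) : c ≤ k * v ^ e := by
  have hck : 0 ≤ c / k := div_nonneg hc hk.le
  rwa [one_div, rpow_inv_le_iff_of_pos hck ((rpow_nonneg hck _).trans hv) he,
    div_le_iff₀' hk] at hv

theorem fixed_time_settling_time_rational_general
    (p₁ p₂ q₁ q₂ : ℕ)
    (hp₁ : 0 < p₁) (hq₁ : 0 < q₁)
    (p q μ₁ μ₂ μ₃ τ : ℝ)
    (hpdef : p = (p₂ : ℝ) / p₁) (hqdef : q = (q₂ : ℝ) / q₁)
    (hp : 0 < p) (hp1 : p < 1) (hq : 1 < q)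
    (hμ₁ : 0 < μ₁) (hμ₂ : 0 < μ₂) (hμ₃ : 0 < μ₃)
    (hτ : τ ∈ Set.Ioo (0 : ℝ) 1)
    (V : ℝ → ℝ) (hVdiff : Differentiable ℝ V)
    (hVineq : ∀ t, 0 ≤ t →
      deriv V t ≤ -μ₁ * (V t) ^ p - μ₂ * (V t) ^ q + μ₃) :
    ∀ t,
      max
        ((π / Real.sin (((1 - p) / (q - p)) * π)) / (τ * μ₁ * (q - p)) *
            (τ * μ₁ / μ₂) ^ ((1 - p) / (q - p))
          - Ief p₁ p₂ q₁ q₂ μ₁ μ₂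
              ((μ₃ / ((1 - τ) * μ₁)) ^ (1 / ((p₂ : ℝ) * q₁)))
          + Ief p₁ p₂ q₁ q₂ μ₁ μ₂ 0)
        ((π / Real.sin (((1 - p) / (q - p)) * π)) / (μ₁ * (q - p)) *
            (μ₁ / (τ * μ₂)) ^ ((1 - p) / (q - p))
          - Ief p₁ p₂ q₁ q₂ μ₁ μ₂
              ((μ₃ / ((1 - τ) * μ₂)) ^ (1 / ((p₁ : ℝ) * q₂)))
          + Ief p₁ p₂ q₁ q₂ μ₁ μ₂ 0)
        ≤ t →
      V t ≤ min ((μ₃ / ((1 - τ) * μ₁)) ^ (1 / p))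
                ((μ₃ / ((1 - τ) * μ₂)) ^ (1 / q)) := by
  intro t ht
  obtain ⟨hτ0, hτ1⟩ := hτ
  rw [Ief_zero, add_zero, add_zero] at ht
  have h1τ : 0 < 1 - τ := sub_pos.2 hτ1
  set K₁ := μ₃ / ((1 - τ) * μ₁)
  set K₂ := μ₃ / ((1 - τ) * μ₂)
  have hK₁ : 0 < K₁ := by positivity
  have hK₂ : 0 < K₂ := by positivity
  have hR₁ : (K₁ ^ (1 / ((p₂ : ℝ) * q₁))) ^ (p₁ * q₁) = K₁ ^ (1 / p) := by
    rw [← rpow_mul_natCast hK₁.le, hpdef]; push_cast; field_simp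
  have hR₂ : (K₂ ^ (1 / ((p₁ : ℝ) * q₂))) ^ (p₁ * q₁) = K₂ ^ (1 / q) := by
    rw [← rpow_mul_natCast hK₂.le, hqdef]; push_cast; field_simp
  rcases le_total (K₁ ^ (1 / p)) (K₂ ^ (1 / q)) with h | h
  · rw [min_eq_left h, ← hR₁]
    refine le_pow_of_settling_bound_le hp₁ hq₁ hpdef hqdef hp1 hq (mul_pos hτ0 hμ₁) hμ₂
      (mul_le_of_le_one_left hμ₁.le hτ1.le) le_rfl (rpow_pos_of_pos hK₁ _) hVdiff
      (fun s hs hVs => ?_) ((le_max_left _ _).trans ht)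
    have := le_mul_rpow_of_div_rpow_one_div_le hμ₃.le (mul_pos h1τ hμ₁) hp (hR₁ ▸ hVs)
    linarith [hVineq s hs]
  · rw [min_eq_right h, ← hR₂]
    refine le_pow_of_settling_bound_le hp₁ hq₁ hpdef hqdef hp1 hq hμ₁ (mul_pos hτ0 hμ₂)
      le_rfl (mul_le_of_le_one_left hμ₂.le hτ1.le) (rpow_pos_of_pos hK₂ _) hVdiff
      (fun s hs hVs => ?_) ((le_max_right _ _).trans ht)
    have := le_mul_rpow_of_div_rpow_one_div_le hμ₃.le (mul_pos h1τ hμ₂) (by linarith) (hR₂ ▸ hVs)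
    linarith [hVineq s hs]

/-- Lemma 4: settling-time estimate for rational exponents
`p = p₂/p₁ < 1 < q = q₂/q₁`. -/
theorem fixed_time_settling_time_rational
    (p₁ p₂ q₁ q₂ : ℕ)
    (hp₁ : 0 < p₁) (hp₂ : 0 < p₂) (hq₁ : 0 < q₁) (hq₂ : 0 < q₂)
    (p q μ₁ μ₂ μ₃ τ : ℝ)
    (hpdef : p = (p₂ : ℝ) / p₁) (hqdef : q = (q₂ : ℝ) / q₁)
    (hp : 0 < p) (hp1 : p < 1) (hq : 1 < q)
    (hμ₁ : 0 < μ₁) (hμ₂ : 0 < μ₂) (hμ₃ : 0 < μ₃)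
    (hτ : τ ∈ Set.Ioo (0 : ℝ) 1)
    (V : ℝ → ℝ) (hVdiff : Differentiable ℝ V)
    (hVnonneg : ∀ t, 0 ≤ t → 0 ≤ V t)
    (hVineq : ∀ t, 0 ≤ t →
      deriv V t ≤ -μ₁ * (V t) ^ p - μ₂ * (V t) ^ q + μ₃) :
    ∀ t,
      max
        ((π / Real.sin (((1 - p) / (q - p)) * π)) / (τ * μ₁ * (q - p)) *
            (τ * μ₁ / μ₂) ^ ((1 - p) / (q - p))
          - Ief p₁ p₂ q₁ q₂ μ₁ μ₂
              ((μ₃ / ((1 - τ) * μ₁)) ^ (1 / ((p₂ : ℝ) * q₁)))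
          + Ief p₁ p₂ q₁ q₂ μ₁ μ₂ 0)
        ((π / Real.sin (((1 - p) / (q - p)) * π)) / (μ₁ * (q - p)) *
            (μ₁ / (τ * μ₂)) ^ ((1 - p) / (q - p))
          - Ief p₁ p₂ q₁ q₂ μ₁ μ₂
              ((μ₃ / ((1 - τ) * μ₂)) ^ (1 / ((p₁ : ℝ) * q₂)))
          + Ief p₁ p₂ q₁ q₂ μ₁ μ₂ 0)
        ≤ t →
      V t ≤ min ((μ₃ / ((1 - τ) * μ₁)) ^ (1 / p))
                ((μ₃ / ((1 - τ) * μ₂)) ^ (1 / q)) :=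
  fixed_time_settling_time_rational_general p₁ p₂ q₁ q₂ hp₁ hq₁ p q μ₁ μ₂ μ₃ τ hpdef hqdef hp hp1 hq
    hμ₁ hμ₂ hμ₃ hτ V hVdiff hVineq
end

section
/- For every real number w and all constants δ > 0 and ε > 0, the following two inequalities hold: 0 ≤ |w| - w²·√( (w² + δ² + ε²) / ((w² + ε²)(w² + δ²)) ) and |w| - w²·√( (w² + δ² + ε²) / ((w² + ε²)(w² + δ²)) ) < εδ / √(ε² + δ²) (Lemma 7). -/
open Real

/-- Lemma 7: smooth non-singular approximation of the absolute value. -/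
theorem abs_approx_two_params (w δ ε : ℝ) (hδ : 0 < δ) (hε : 0 < ε) :
    0 ≤ |w| - w ^ 2 * Real.sqrt ((w ^ 2 + δ ^ 2 + ε ^ 2) /
        ((w ^ 2 + ε ^ 2) * (w ^ 2 + δ ^ 2))) ∧
    |w| - w ^ 2 * Real.sqrt ((w ^ 2 + δ ^ 2 + ε ^ 2) /
        ((w ^ 2 + ε ^ 2) * (w ^ 2 + δ ^ 2)))
      < ε * δ / Real.sqrt (ε ^ 2 + δ ^ 2) := by
  set T : ℝ := (w ^ 2 + δ ^ 2 + ε ^ 2) / ((w ^ 2 + ε ^ 2) * (w ^ 2 + δ ^ 2)) with hT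
  set c : ℝ := ε * δ / Real.sqrt (ε ^ 2 + δ ^ 2) with hc
  have hD : (0:ℝ) < (w ^ 2 + ε ^ 2) * (w ^ 2 + δ ^ 2) := by positivity
  have hTpos : 0 < T := by rw [hT]; positivity
  have hcpos : 0 < c := by rw [hc]; positivity
  have hsq : Real.sqrt (ε ^ 2 + δ ^ 2) ^ 2 = ε ^ 2 + δ ^ 2 := Real.sq_sqrt (by positivity)
  have hc2 : c ^ 2 * (ε ^ 2 + δ ^ 2) = ε ^ 2 * δ ^ 2 := by
    rw [hc]
    have h0 : Real.sqrt (ε ^ 2 + δ ^ 2) ≠ 0 := by positivity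
    field_simp
    nlinarith [hsq]
  -- rewrite w^2 * sqrt T as sqrt (w^4 * T)
  have hkey : w ^ 2 * Real.sqrt T = Real.sqrt ((w ^ 2) ^ 2 * T) := by
    rw [Real.sqrt_mul (by positivity), Real.sqrt_sq (by positivity)]
  have habs : |w| = Real.sqrt (w ^ 2) := by
    rw [Real.sqrt_sq_eq_abs]
  have hle : (w ^ 2) ^ 2 * T ≤ w ^ 2 := by
    rw [hT, ← mul_div_assoc, div_le_iff₀ hD]
    nlinarith [sq_nonneg w, sq_nonneg (w*ε*δ), mul_pos (mul_pos hε hδ) (mul_pos hε hδ)]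
  constructor
  · rw [hkey, habs]
    have := Real.sqrt_le_sqrt hle
    linarith [this]
  · rcases eq_or_ne w 0 with hw | hw
    · simp [hw]
      positivity
    · have hwpos : 0 < |w| := abs_pos.mpr hw
      have hw2 : (0:ℝ) < w ^ 2 := by positivity
      have hprod : 0 < w ^ 2 * Real.sqrt T := by positivity
      rcases le_or_gt |w| c with h | h
      · linarith
      · -- |w| - c < w^2 * sqrt T, both sides positive, square
        rw [hkey]
        have hgoal : (|w| - c) ^ 2 < (w ^ 2) ^ 2 * T := by
          rw [hT, ← mul_div_assoc, lt_div_iff₀ hD]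
          have hm : |w| ^ 2 = w ^ 2 := sq_abs w
          rw [← hm]
          set m := |w| with hmdef
          have hab : (0:ℝ) < ε ^ 2 + δ ^ 2 := by positivity
          have hP : 0 < c * (2 * m - c) := mul_pos hcpos (by linarith)
          have hPm4 : 0 ≤ c * (2 * m - c) * m ^ 4 := by positivity
          have hPab : 0 ≤ c * (2 * m - c) * (ε ^ 2 * δ ^ 2) := by positivity
          have hB : 0 < 2 * c * m ^ 2 * (m - c) * (ε ^ 2 + δ ^ 2) := by
            have : 0 < m - c := by linarith
            positivity
          have hc2m : m ^ 2 * (c ^ 2 * (ε ^ 2 + δ ^ 2)) = m ^ 2 * (ε ^ 2 * δ ^ 2) := by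
            rw [hc2]
          nlinarith [hPm4, hPab, hB, hc2m]
        have h1 : |w| - c < Real.sqrt ((w ^ 2) ^ 2 * T) := by
          have h2 : 0 ≤ |w| - c := le_of_lt (by linarith)
          calc |w| - c = Real.sqrt ((|w| - c) ^ 2) := (Real.sqrt_sq h2).symm
            _ < Real.sqrt ((w ^ 2) ^ 2 * T) := by
                exact Real.sqrt_lt_sqrt (by positivity) hgoal
        linarith
end

section
/- For every real number v and every constant δ_v > 0, the following two inequalities hold: 0 ≤ |v| - (2/π)·v·arctan(v/δ_v) and |v| - (2/π)·v·arctan(v/δ_v) < (2/π)·δ_v (Lemma 8, inequality (20)). -/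
open Real

lemma arctan_lt_self_of_pos {x : ℝ} (hx : 0 < x) : Real.arctan x < x := by
  have h1 : 0 < Real.arctan x := by simpa using Real.arctan_strictMono hx
  have h2 : Real.arctan x < π / 2 := Real.arctan_lt_pi_div_two x
  have := Real.lt_tan h1 h2
  rwa [Real.tan_arctan] at this

lemma abs_approx_arctan_nonneg {x δv : ℝ} (hx : 0 ≤ x) (hδ : 0 < δv) :
    0 ≤ x - (2 / π) * (x * Real.arctan (x / δv)) ∧
    x - (2 / π) * (x * Real.arctan (x / δv)) < (2 / π) * δv := by
  have hπ := Real.pi_pos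
  constructor
  · have h2 : Real.arctan (x / δv) < π / 2 := Real.arctan_lt_pi_div_two _
    have : x * Real.arctan (x / δv) ≤ x * (π / 2) :=
      mul_le_mul_of_nonneg_left h2.le hx
    rw [sub_nonneg]
    calc (2 / π) * (x * Real.arctan (x / δv)) ≤ (2 / π) * (x * (π / 2)) := by
          apply mul_le_mul_of_nonneg_left this; positivity
      _ = x := by field_simp
  · rcases eq_or_lt_of_le hx with h | h
    · rw [← h]
      simp only [zero_div, Real.arctan_zero, mul_zero, sub_zero]
      positivity
    · have hinv : Real.arctan (δv / x) = π / 2 - Real.arctan (x / δv) := by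
        have := Real.arctan_inv_of_pos (show (0:ℝ) < x / δv by positivity)
        rwa [inv_div] at this
      have hlt : Real.arctan (δv / x) < δv / x :=
        arctan_lt_self_of_pos (by positivity)
      have key : x * (π / 2 - Real.arctan (x / δv)) < δv := by
        rw [← hinv]
        calc x * Real.arctan (δv / x) < x * (δv / x) :=
              mul_lt_mul_of_pos_left hlt h
          _ = δv := by field_simp
      have h2π : (0:ℝ) < 2 / π := by positivity
      have : (2 / π) * (x * (π / 2 - Real.arctan (x / δv))) < (2 / π) * δv :=
        mul_lt_mul_of_pos_left key h2π
      calc x - 2 / π * (x * Real.arctan (x / δv))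
          = (2 / π) * (x * (π / 2 - Real.arctan (x / δv))) := by
            field_simp
        _ < (2 / π) * δv := this

/-- Lemma 8, inequality (20): arctangent approximation of the absolute
value. -/
theorem abs_approx_arctan (v δv : ℝ) (hδ : 0 < δv) :
    0 ≤ |v| - (2 / π) * v * Real.arctan (v / δv) ∧
    |v| - (2 / π) * v * Real.arctan (v / δv) < (2 / π) * δv := by
  have key : (2 / π) * v * Real.arctan (v / δv)
      = (2 / π) * (|v| * Real.arctan (|v| / δv)) := by
    rcases abs_cases v with ⟨h, _⟩ | ⟨h, _⟩
    · rw [h]; ring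
    · rw [h, neg_div, Real.arctan_neg]; ring
  rw [key]
  exact abs_approx_arctan_nonneg (abs_nonneg v) hδ
end

section
/- Let K_l < K_u be real numbers, let c₁ > 0 and c₂ > 0, and let m = m₂/m₁ and n = n₂/n₁ be positive rationals with m₁, m₂, n₁, n₂ positive odd integers. For y ∈ ℝ and r > 0 define sig(y)^r = sign(y)·|y|^r, and for x ∈ (K_l, K_u) define z₁(x) = c₁ / sig(K_l - x)^m + c₂ / sig(K_u - x)^n. Then for every M > 0 there exist η₁ > 0 and η₂ > 0 with K_l + η₁ ≤ K_u - η₂ such that every x ∈ (K_l, K_u) with |z₁(x)| ≤ M satisfies K_l + η₁ ≤ x ≤ K_u - η₂. In particular, if z₁ evaluated along an error trajectory is bounded, the error stays in a compact subset of the prescribed open domain (K_l, K_u). -/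
open Real

/-- The signed power `sig(y)^r = sign(y)·|y|^r`. -/
noncomputable def sig (y r : ℝ) : ℝ := Real.sign y * |y| ^ r

/-- Boundedness of the UBF (29) confines the error to a compact subset of
the prescribed open domain `(K_l, K_u)`. -/
theorem ubf_bounded_implies_compact_confinement
    (Kl Ku c₁ c₂ m n : ℝ) (m₁ m₂ n₁ n₂ : ℕ)
    (hK : Kl < Ku) (hc₁ : 0 < c₁) (hc₂ : 0 < c₂)
    (hm₁ : Odd m₁) (hm₂ : Odd m₂) (hn₁ : Odd n₁) (hn₂ : Odd n₂)
    (hm₁pos : 0 < m₁) (hm₂pos : 0 < m₂) (hn₁pos : 0 < n₁) (hn₂pos : 0 < n₂)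
    (hm : m = (m₂ : ℝ) / m₁) (hn : n = (n₂ : ℝ) / n₁) :
    ∀ M : ℝ, 0 < M → ∃ η₁ η₂ : ℝ, 0 < η₁ ∧ 0 < η₂ ∧
      Kl + η₁ ≤ Ku - η₂ ∧
      ∀ x ∈ Set.Ioo Kl Ku,
        |c₁ / sig (Kl - x) m + c₂ / sig (Ku - x) n| ≤ M →
        Kl + η₁ ≤ x ∧ x ≤ Ku - η₂ := by
  have hmpos : 0 < m := by
    rw [hm]; exact div_pos (by exact_mod_cast hm₂pos) (by exact_mod_cast hm₁pos)
  have hnpos : 0 < n := by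
    rw [hn]; exact div_pos (by exact_mod_cast hn₂pos) (by exact_mod_cast hn₁pos)
  intro M hM
  set d := Ku - Kl with hd
  have hd2 : 0 < d / 2 := by simp only [hd]; linarith
  set B₁ := c₁ / (d / 2) ^ m with hB₁
  set B₂ := c₂ / (d / 2) ^ n with hB₂
  have hB₁pos : 0 < B₁ := div_pos hc₁ (Real.rpow_pos_of_pos hd2 m)
  have hB₂pos : 0 < B₂ := div_pos hc₂ (Real.rpow_pos_of_pos hd2 n)
  set δ₁ := (c₁ / (M + B₂)) ^ m⁻¹ with hδ₁
  set δ₂ := (c₂ / (M + B₁)) ^ n⁻¹ with hδ₂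
  have hδ₁pos : 0 < δ₁ := Real.rpow_pos_of_pos (div_pos hc₁ (by linarith)) _
  have hδ₂pos : 0 < δ₂ := Real.rpow_pos_of_pos (div_pos hc₂ (by linarith)) _
  refine ⟨min (d / 2) δ₁, min (d / 2) δ₂, lt_min hd2 hδ₁pos, lt_min hd2 hδ₂pos, ?_, ?_⟩
  · have h1 : min (d / 2) δ₁ ≤ d / 2 := min_le_left _ _
    have h2 : min (d / 2) δ₂ ≤ d / 2 := min_le_left _ _
    simp only [hd] at h1 h2 ⊢
    linarith
  · intro x hx hz
    obtain ⟨hx1, hx2⟩ := hx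
    have hxl : 0 < x - Kl := sub_pos.mpr hx1
    have hxu : 0 < Ku - x := sub_pos.mpr hx2
    have hsig1 : sig (Kl - x) m = -((x - Kl) ^ m) := by
      have h : Kl - x < 0 := by linarith
      rw [sig, Real.sign_of_neg h, abs_of_neg h, neg_sub]
      ring
    have hsig2 : sig (Ku - x) n = (Ku - x) ^ n := by
      rw [sig, Real.sign_of_pos hxu, abs_of_pos hxu, one_mul]
    rw [hsig1, hsig2, div_neg] at hz
    set A := c₁ / (x - Kl) ^ m with hA
    set Bx := c₂ / (Ku - x) ^ n with hBx
    have hApos : 0 < A := div_pos hc₁ (Real.rpow_pos_of_pos hxl m)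
    have hBxpos : 0 < Bx := div_pos hc₂ (Real.rpow_pos_of_pos hxu n)
    obtain ⟨hz1, hz2⟩ := abs_le.mp hz
    constructor
    · by_cases hcase : d / 2 ≤ x - Kl
      · have := min_le_left (d / 2) δ₁
        linarith
      · push_neg at hcase
        have hKux : d / 2 ≤ Ku - x := by simp only [hd] at hcase ⊢; linarith
        have hBle : Bx ≤ B₂ := by
          rw [hBx, hB₂]
          gcongr
        have hAle : A ≤ M + B₂ := by linarith
        have hc : c₁ / (M + B₂) ≤ (x - Kl) ^ m := by
          rw [div_le_iff₀ (by linarith)]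
          have := (div_le_iff₀ (Real.rpow_pos_of_pos hxl m)).mp hAle
          linarith [this]
        have hr := Real.rpow_le_rpow (le_of_lt (div_pos hc₁ (by linarith))) hc
          (inv_nonneg.mpr hmpos.le)
        rw [Real.rpow_rpow_inv hxl.le hmpos.ne'] at hr
        have := min_le_right (d / 2) δ₁
        rw [← hδ₁] at hr
        linarith
    · by_cases hcase : d / 2 ≤ Ku - x
      · have := min_le_left (d / 2) δ₂
        linarith
      · push_neg at hcase
        have hKlx : d / 2 ≤ x - Kl := by simp only [hd] at hcase ⊢; linarith
        have hAle' : A ≤ B₁ := by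
          rw [hA, hB₁]
          gcongr
        have hBle : Bx ≤ M + B₁ := by linarith
        have hc : c₂ / (M + B₁) ≤ (Ku - x) ^ n := by
          rw [div_le_iff₀ (by linarith)]
          have := (div_le_iff₀ (Real.rpow_pos_of_pos hxu n)).mp hBle
          linarith [this]
        have hr := Real.rpow_le_rpow (le_of_lt (div_pos hc₂ (by linarith))) hc
          (inv_nonneg.mpr hnpos.le)
        rw [Real.rpow_rpow_inv hxu.le hnpos.ne'] at hr
        have := min_le_right (d / 2) δ₂
        rw [← hδ₂] at hr
        linarith
end

section
/- Let T_s > 0, Δ > 0, e_∞ > 0, a_l > 0, b_l > 0 and e₀ ∈ ℝ satisfy e₀ - Δ + e_∞ > 0. Set c_{1l} = 2·exp(b_l)/(exp(2b_l) + 1), and define K_{1l} : [0,∞) → ℝ by K_{1l}(t) = ((e₀ - Δ + e_∞)/c_{1l})·sech(a_l·t/(T_s - t) + b_l) - e_∞ for t ∈ [0, T_s), and K_{1l}(t) = -e_∞ for t ≥ T_s. Then: (i) c_{1l} = sech(b_l), and consequently K_{1l}(0) = e₀ - Δ; (ii) K_{1l} is strictly decreasing on [0, T_s]; (iii) K_{1l}(t)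 → -e_∞ as t → T_s from the left, so K_{1l} is continuous on [0,∞) (properties of the novel performance function (23)). -/
/-!
Since `2 e^b / (e^{2b} + 1) = 2 / (e^b + e^{-b})`, the constant `c1l` is `sech bl`, which makes
`K 0 = e₀ - Δ`. On `[0, Ts)` the argument `al t / (Ts - t) + bl` increases from `bl ≥ 0` to `+∞`,
where `cosh` is increasing and unbounded, so the `sech` term decreases strictly to `0`. Hence `K`
stays above `-einf` before `Ts`, which extends the strict decrease to `[0, Ts]`, and its left limit
at `Ts` is the constant value `-einf` taken afterwards, which gives continuity.
-/

open Real Filter Set Topology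

namespace Real

theorem two_mul_exp_div_exp_two_mul_add_one (x : ℝ) :
    2 * exp x / (exp (2 * x) + 1) = 1 / cosh x := by
  rw [cosh_eq, exp_neg, two_mul x, exp_add]
  field_simp

theorem tendsto_cosh_atTop : Tendsto cosh atTop atTop := by
  refine tendsto_atTop_mono (fun x => ?_) (tendsto_exp_atTop.atTop_div_const two_pos)
  rw [cosh_eq]
  linarith [exp_pos (-x)]

theorem strictAntiOn_one_div_cosh : StrictAntiOn (fun x => 1 / cosh x) (Ici 0) :=
  fun _ hx _ hy hxy => one_div_lt_one_div_of_lt (cosh_pos _) (cosh_strictMonoOn hx hy hxy)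

end Real

section TimeWarp

variable {a T : ℝ}

theorem strictMonoOn_mul_div_sub (ha : 0 < a) (hT : 0 < T) :
    StrictMonoOn (fun t => a * t / (T - t)) (Iio T) := by
  intro s (hs : s < T) t (ht : t < T) hst
  rw [div_lt_div_iff₀ (sub_pos.2 hs) (sub_pos.2 ht)]
  nlinarith [mul_pos ha (mul_pos hT (sub_pos.2 hst))]

theorem tendsto_mul_div_sub_nhdsLT (ha : 0 < a) (hT : 0 < T) :
    Tendsto (fun t => a * t / (T - t)) (𝓝[<] T) atTop := by
  have hgap : Tendsto (fun t => T - t) (𝓝[<] T) (𝓝[>] 0) := by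
    refine tendsto_nhdsWithin_of_tendsto_nhds_of_eventually_within _ ?_ ?_
    · simpa using ((continuous_sub_left T).tendsto' T 0 (sub_self T)).mono_left nhdsWithin_le_nhds
    · filter_upwards [self_mem_nhdsWithin] with t (ht : t < T)
      exact sub_pos.2 ht
  have hnum : Tendsto (fun t => a * t) (𝓝[<] T) (𝓝 (a * T)) :=
    (tendsto_const_nhds.mul tendsto_id).mono_left nhdsWithin_le_nhds
  simpa only [div_eq_mul_inv, Function.comp_def] using
    hnum.pos_mul_atTop (mul_pos ha hT) (tendsto_inv_nhdsGT_zero.comp hgap)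

end TimeWarp

/-- The performance function (23) on `[0, T)`, with `C = (e₀ - Δ + e_∞) / c_{1l}`. -/
noncomputable def sechPF (C a b e T : ℝ) (t : ℝ) : ℝ :=
  C * (1 / cosh (a * t / (T - t) + b)) - e

namespace sechPF

variable {C a b e T : ℝ}

theorem neg_lt (hC : 0 < C) (t : ℝ) : -e < sechPF C a b e T t := by
  have : 0 < C * (1 / cosh (a * t / (T - t) + b)) := by positivity
  unfold sechPF
  linarith

theorem strictAntiOn (hC : 0 < C) (ha : 0 < a) (hb : 0 ≤ b) (hT : 0 < T) :
    StrictAntiOn (sechPF C a b e T) (Ico 0 T) := by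
  have hwarp : MapsTo (fun t => a * t / (T - t) + b) (Ico 0 T) (Ici 0) :=
    fun t ht => add_nonneg (div_nonneg (mul_nonneg ha.le ht.1) (sub_nonneg.2 ht.2.le)) hb
  intro s hs t ht hst
  have hmono : a * s / (T - s) + b < a * t / (T - t) + b := by
    simpa using strictMonoOn_mul_div_sub ha hT hs.2 ht.2 hst
  have := strictAntiOn_one_div_cosh (hwarp hs) (hwarp ht) hmono
  unfold sechPF
  gcongr

theorem tendsto_nhdsLT (ha : 0 < a) (hT : 0 < T) :
    Tendsto (sechPF C a b e T) (𝓝[<] T) (𝓝 (-e)) := by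
  have hsech : Tendsto (fun t => 1 / cosh (a * t / (T - t) + b)) (𝓝[<] T) (𝓝 0) := by
    simpa only [one_div, Function.comp_def] using tendsto_inv_atTop_zero.comp <|
      tendsto_cosh_atTop.comp <| tendsto_atTop_add_const_right _ b (tendsto_mul_div_sub_nhdsLT ha hT)
  unfold sechPF
  simpa using (hsech.const_mul C).sub_const e

theorem continuousOn : ContinuousOn (sechPF C a b e T) (Iio T) := by
  intro t (ht : t < T)
  have : T - t ≠ 0 := sub_ne_zero.2 ht.ne'
  unfold sechPF
  fun_prop (disch := first | assumption | positivity)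

end sechPF

theorem StrictAntiOn.Icc_of_Ico {α β : Type*} [LinearOrder α] [Preorder β] {f : α → β} {a b : α}
    (hf : StrictAntiOn f (Ico a b)) (hb : ∀ x ∈ Ico a b, f b < f x) :
    StrictAntiOn f (Icc a b) := by
  intro s hs t ht hst
  rcases ht.2.eq_or_lt with rfl | htb
  · exact hb s ⟨hs.1, hst⟩
  · exact hf ⟨hs.1, hst.trans htb⟩ ⟨ht.1, htb⟩ hst

theorem ContinuousOn.Ici_of_Ico_of_Ici {α β : Type*} [TopologicalSpace α] [LinearOrder α]
    [OrderTopology α] [TopologicalSpace β] {f : α → β} {a b : α}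
    (hl : ContinuousOn f (Ico a b)) (hb : ContinuousWithinAt f (Iio b) b)
    (hr : ContinuousOn f (Ici b)) : ContinuousOn f (Ici a) := by
  intro x (hx : a ≤ x)
  rcases lt_trichotomy x b with hxb | rfl | hbx
  · exact (hl x ⟨hx, hxb⟩).mono_of_mem_nhdsWithin (inter_mem_nhdsWithin _ (Iio_mem_nhds hxb))
  · exact (hb.union (hr x le_rfl)).mono fun y _ => lt_or_ge y x
  · exact (hr x hbx.le).mono_of_mem_nhdsWithin (mem_nhdsWithin_of_mem_nhds (Ici_mem_nhds hbx))

theorem performance_function_sech_properties_general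
    (Ts Δ einf al bl e₀ : ℝ)
    (hTs : 0 < Ts) (hal : 0 < al) (hbl : 0 < bl)
    (he₀ : 0 < e₀ - Δ + einf)
    (c1l : ℝ)
    (hc1l : c1l = 2 * Real.exp bl / (Real.exp (2 * bl) + 1))
    (K : ℝ → ℝ)
    (hK₁ : ∀ t, 0 ≤ t → t < Ts →
      K t = ((e₀ - Δ + einf) / c1l) *
              (1 / Real.cosh (al * t / (Ts - t) + bl)) - einf)
    (hK₂ : ∀ t, Ts ≤ t → K t = -einf) :
    c1l = 1 / Real.cosh bl ∧
    K 0 = e₀ - Δ ∧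
    StrictAntiOn K (Set.Icc 0 Ts) ∧
    Tendsto K (nhdsWithin Ts (Set.Iio Ts)) (nhds (-einf)) ∧
    ContinuousOn K (Set.Ici 0) := by
  have hc : c1l = 1 / cosh bl := hc1l.trans (two_mul_exp_div_exp_two_mul_add_one bl)
  have hC : 0 < (e₀ - Δ + einf) / c1l := div_pos he₀ (by rw [hc]; positivity)
  have hK : EqOn K (sechPF ((e₀ - Δ + einf) / c1l) al bl einf Ts) (Ico 0 Ts) :=
    fun t ht => hK₁ t ht.1 ht.2
  have hKTs : K Ts = -einf := hK₂ Ts le_rfl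
  have hlim : Tendsto K (𝓝[<] Ts) (𝓝 (-einf)) :=
    (sechPF.tendsto_nhdsLT hal hTs).congr' (eventuallyEq_of_mem (Ico_mem_nhdsLT hTs) hK.symm)
  refine ⟨hc, ?_, ?_, hlim, ?_⟩
  · rw [hK₁ 0 le_rfl hTs, hc, mul_zero, zero_div, zero_add]
    field_simp
    ring
  · refine ((sechPF.strictAntiOn hC hal hbl.le hTs).congr hK.symm).Icc_of_Ico fun x hx => ?_
    rw [hKTs, hK hx]
    exact sechPF.neg_lt hC x
  · refine ContinuousOn.Ici_of_Ico_of_Ici ?_ (hKTs ▸ hlim) ?_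
    · exact (sechPF.continuousOn.mono fun t ht => ht.2).congr hK
    · exact continuousOn_const.congr fun t ht => hK₂ t ht

/-- Properties of the novel performance function (23), built from the
hyperbolic secant `sech x = 1 / cosh x`. -/
theorem performance_function_sech_properties
    (Ts Δ einf al bl e₀ : ℝ)
    (hTs : 0 < Ts) (hΔ : 0 < Δ) (heinf : 0 < einf)
    (hal : 0 < al) (hbl : 0 < bl)
    (he₀ : 0 < e₀ - Δ + einf)
    (c1l : ℝ)
    (hc1l : c1l = 2 * Real.exp bl / (Real.exp (2 * bl) + 1))
    (K : ℝ → ℝ)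
    (hK₁ : ∀ t, 0 ≤ t → t < Ts →
      K t = ((e₀ - Δ + einf) / c1l) *
              (1 / Real.cosh (al * t / (Ts - t) + bl)) - einf)
    (hK₂ : ∀ t, Ts ≤ t → K t = -einf) :
    c1l = 1 / Real.cosh bl ∧
    K 0 = e₀ - Δ ∧
    StrictAntiOn K (Set.Icc 0 Ts) ∧
    Tendsto K (nhdsWithin Ts (Set.Iio Ts)) (nhds (-einf)) ∧
    ContinuousOn K (Set.Ici 0) :=
  performance_function_sech_properties_general Ts Δ einf al bl e₀ hTs hal hbl he₀ c1l hc1l K hK₁ hK₂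
end

section
/- Let 0 < p < 1 < q, let μ₁ > 0, μ₂ > 0, 0 < μ₃ < ∞, and let τ ∈ (0,1). Suppose V : [0,∞) → [0,∞) is differentiable and satisfies V'(t) ≤ -μ₁·V(t)^p - μ₂·V(t)^q + μ₃ for all t ≥ 0. Then the residual set is forward invariant: if V(t₀) ≤ R for some t₀ ≥ 0, then V(t) ≤ R for all t ≥ t₀, where R = min{ (μ₃/((1-τ)μ₁))^(1/p) , (μ₃/((1-τ)μ₂))^(1/q) }. Moreover, whenever V(t) > R, one has V'(t) ≤ -τμ₁·V(t)^p - μ₂·V(t)^q < 0 or V'(t) ≤ -μ₁·V(t)^p - τμ₂·V(t)^q < 0. -/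
open Real

lemma residual_key (p μ μ₃ τ : ℝ) (hp : 0 < p) (hμ : 0 < μ) (hμ₃ : 0 < μ₃)
    (hτ1 : τ < 1) {x : ℝ} (hx : (μ₃ / ((1 - τ) * μ)) ^ (1 / p) < x) :
    μ₃ < (1 - τ) * μ * x ^ p := by
  have h1τ : 0 < 1 - τ := by linarith
  have hc : 0 < μ₃ / ((1 - τ) * μ) := by positivity
  have hA : (0:ℝ) < (μ₃ / ((1 - τ) * μ)) ^ (1 / p) := Real.rpow_pos_of_pos hc _
  have hxp := Real.rpow_lt_rpow hA.le hx hp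
  have hpe : (1/p) * p = 1 := by field_simp
  rw [← Real.rpow_mul hc.le, hpe, Real.rpow_one] at hxp
  have := (div_lt_iff₀ (by positivity : (0:ℝ) < (1 - τ) * μ)).mp hxp
  linarith [this]

/-- Forward invariance of the residual set and the splitting step
(inequalities (6) and (7)) in the proof of the improved fixed-time
stability theorem. -/
theorem residual_set_forward_invariant
    (p q μ₁ μ₂ μ₃ τ : ℝ)
    (hp : 0 < p) (hp1 : p < 1) (hq : 1 < q)
    (hμ₁ : 0 < μ₁) (hμ₂ : 0 < μ₂) (hμ₃ : 0 < μ₃)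
    (hτ : τ ∈ Set.Ioo (0 : ℝ) 1)
    (V : ℝ → ℝ) (hVdiff : Differentiable ℝ V)
    (hVnonneg : ∀ t, 0 ≤ t → 0 ≤ V t)
    (hVineq : ∀ t, 0 ≤ t →
      deriv V t ≤ -μ₁ * (V t) ^ p - μ₂ * (V t) ^ q + μ₃) :
    (∀ t₀, 0 ≤ t₀ →
      V t₀ ≤ min ((μ₃ / ((1 - τ) * μ₁)) ^ (1 / p))
                 ((μ₃ / ((1 - τ) * μ₂)) ^ (1 / q)) →
      ∀ t, t₀ ≤ t →
        V t ≤ min ((μ₃ / ((1 - τ) * μ₁)) ^ (1 / p))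
                  ((μ₃ / ((1 - τ) * μ₂)) ^ (1 / q))) ∧
    (∀ t, 0 ≤ t →
      min ((μ₃ / ((1 - τ) * μ₁)) ^ (1 / p))
          ((μ₃ / ((1 - τ) * μ₂)) ^ (1 / q)) < V t →
      (deriv V t ≤ -(τ * μ₁) * (V t) ^ p - μ₂ * (V t) ^ q ∧
        -(τ * μ₁) * (V t) ^ p - μ₂ * (V t) ^ q < 0) ∨
      (deriv V t ≤ -μ₁ * (V t) ^ p - (τ * μ₂) * (V t) ^ q ∧
        -μ₁ * (V t) ^ p - (τ * μ₂) * (V t) ^ q < 0)) := by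
  obtain ⟨hτ0, hτ1⟩ := hτ
  set A := (μ₃ / ((1 - τ) * μ₁)) ^ (1 / p) with hAdef
  set B := (μ₃ / ((1 - τ) * μ₂)) ^ (1 / q) with hBdef
  have h1τ : 0 < 1 - τ := by linarith
  have hApos : 0 < A := Real.rpow_pos_of_pos (div_pos hμ₃ (mul_pos h1τ hμ₁)) _
  have hBpos : 0 < B := Real.rpow_pos_of_pos (div_pos hμ₃ (mul_pos h1τ hμ₂)) _
  have hRpos : 0 < min A B := lt_min hApos hBpos
  -- second part
  have part2 : ∀ t, 0 ≤ t → min A B < V t →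
      (deriv V t ≤ -(τ * μ₁) * (V t) ^ p - μ₂ * (V t) ^ q ∧
        -(τ * μ₁) * (V t) ^ p - μ₂ * (V t) ^ q < 0) ∨
      (deriv V t ≤ -μ₁ * (V t) ^ p - (τ * μ₂) * (V t) ^ q ∧
        -μ₁ * (V t) ^ p - (τ * μ₂) * (V t) ^ q < 0) := by
    intro t ht hVt
    have hVpos : 0 < V t := hRpos.trans hVt
    have hVp : 0 < (V t) ^ p := Real.rpow_pos_of_pos hVpos p
    have hVq : 0 < (V t) ^ q := Real.rpow_pos_of_pos hVpos q
    have hd := hVineq t ht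
    rcases min_cases A B with ⟨hmin, _⟩ | ⟨hmin, _⟩
    · left
      rw [hmin, hAdef] at hVt
      have hk := residual_key p μ₁ μ₃ τ hp hμ₁ hμ₃ hτ1 (x := V t) hVt
      constructor
      · nlinarith
      · nlinarith [mul_pos (mul_pos hτ0 hμ₁) hVp, mul_pos hμ₂ hVq]
    · right
      rw [hmin, hBdef] at hVt
      have hk := residual_key q μ₂ μ₃ τ (by linarith) hμ₂ hμ₃ hτ1 (x := V t) hVt
      constructor
      · nlinarith
      · nlinarith [mul_pos (mul_pos hτ0 hμ₂) hVq, mul_pos hμ₁ hVp]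
  have derivNeg : ∀ t, 0 ≤ t → min A B < V t → deriv V t < 0 := by
    intro t ht hVt
    rcases part2 t ht hVt with ⟨h1, h2⟩ | ⟨h1, h2⟩ <;> linarith
  refine ⟨?_, part2⟩
  intro t₀ ht₀ hV0 t htt
  by_contra hcon
  push_neg at hcon
  set S : Set ℝ := Set.Icc t₀ t ∩ V ⁻¹' Set.Iic (min A B) with hSdef
  have hSne : S.Nonempty := ⟨t₀, ⟨le_refl _, htt⟩, hV0⟩
  have hSbdd : BddAbove S := ⟨t, fun u hu => hu.1.2⟩
  have hSclosed : IsClosed S :=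
    (isClosed_Icc).inter (isClosed_Iic.preimage hVdiff.continuous)
  have hsmem : sSup S ∈ S := hSclosed.csSup_mem hSne hSbdd
  set s := sSup S with hs
  obtain ⟨⟨hst₀, hst⟩, hVs⟩ := hsmem
  have hsne : s ≠ t := fun h => absurd (h ▸ hVs) (not_le.mpr hcon)
  have hslt : s < t := lt_of_le_of_ne hst hsne
  have hIoc : ∀ u ∈ Set.Ioc s t, min A B < V u := by
    intro u ⟨hu1, hu2⟩
    by_contra hle
    push_neg at hle
    exact absurd (le_csSup hSbdd ⟨⟨hst₀.trans hu1.le, hu2⟩, hle⟩) (not_le.mpr hu1)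
  have hanti : StrictAntiOn V (Set.Icc s t) := by
    apply strictAntiOn_of_deriv_neg (convex_Icc s t) hVdiff.continuous.continuousOn
    intro x hx
    rw [interior_Icc] at hx
    exact derivNeg x (le_trans (le_trans ht₀ hst₀) hx.1.le)
      (hIoc x ⟨hx.1, hx.2.le⟩)
  have hlt := hanti (Set.left_mem_Icc.mpr hslt.le) (Set.right_mem_Icc.mpr hslt.le) hslt
  have hVs' : V s ≤ min A B := hVs
  linarith
end
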